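/- arXiv:1803.06016 — 11 statements merged into one kernel-verified Lean document; each statement's English description precedes it below -/
import Mathlib

section
/- Let p be a prime, s a nonnegative integer, and ψ a primitive Dirichlet character of conductor p^s. For nonnegative integers a, b with a + b ≥ s, the sum of ψ(x + p^a·u) over u ranging modulo p^b equals p^b·ψ(x) if s ≤ a, and equals 0 otherwise. -/
/-- Let `p` be a prime, `s` a nonnegative integer, and `ψ` a primitive
Dirichlet character of conductor `p^s`. For nonnegative integers `a, b` with `a + b ≥ s`,
the sum of `ψ(x + p^a·u)` over `u` ranging modulo `p^b` equals `p^b·ψ(x)` if `s ≤ a`,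
and equals `0` otherwise. -/
theorem sum_primitive_character_shift (p : ℕ) (hp : p.Prime) (s a b : ℕ)
    (ψ : DirichletCharacter ℂ (p ^ s)) (hψ : ψ.IsPrimitive)
    (hab : s ≤ a + b) (x : ℤ) :
    ∑ u ∈ Finset.range (p ^ b), ψ (((x + (p : ℤ) ^ a * (u : ℤ)) : ℤ) : ZMod (p ^ s)) =
      if s ≤ a then (p : ℂ) ^ b * ψ ((x : ZMod (p ^ s))) else 0 := by
  have hpb : 0 < p ^ b := pow_pos hp.pos b
  by_cases hsa : s ≤ a
  · -- each summand equals ψ x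
    rw [if_pos hsa]
    have hzero : ((p : ZMod (p ^ s))) ^ a = 0 := by
      have h1 : ((p ^ a : ℕ) : ZMod (p ^ s)) = 0 := by
        rw [ZMod.natCast_eq_zero_iff]
        exact pow_dvd_pow p hsa
      simpa using h1
    have hconst : ∀ u ∈ Finset.range (p ^ b),
        ψ (((x + (p : ℤ) ^ a * (u : ℤ)) : ℤ) : ZMod (p ^ s)) = ψ ((x : ZMod (p ^ s))) := by
      intro u _
      congr 1
      push_cast
      rw [hzero]
      ring
    rw [Finset.sum_congr rfl hconst, Finset.sum_const, Finset.card_range]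
    push_cast
    ring
  · rw [if_neg hsa]
    push_neg at hsa
    have hs : 0 < s := lt_of_le_of_lt (Nat.zero_le a) hsa
    haveI : NeZero (p ^ s) := ⟨pow_ne_zero s hp.ne_zero⟩
    haveI : NeZero (p ^ b) := ⟨pow_ne_zero b hp.ne_zero⟩
    have hdvd : p ^ a ∣ p ^ s := pow_dvd_pow p hsa.le
    -- find a unit y ≡ 1 mod p^a with ψ y ≠ 1
    have hex : ∃ y : (ZMod (p ^ s))ˣ, ZMod.unitsMap hdvd y = 1 ∧ ψ.toUnitHom y ≠ 1 := by
      by_contra hcon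
      push_neg at hcon
      have hft : ψ.FactorsThrough (p ^ a) := by
        rw [DirichletCharacter.factorsThrough_iff_ker_unitsMap hdvd]
        intro y hy
        exact hcon y hy
      have hle : DirichletCharacter.conductor ψ ≤ p ^ a := Nat.sInf_le hft
      rw [hψ] at hle
      exact absurd (lt_of_le_of_lt hle (pow_lt_pow_right₀ hp.one_lt hsa)) (lt_irrefl _)
    obtain ⟨y, hy1, hyψ⟩ := hex
    set Y : ℤ := ((y : ZMod (p ^ s)).val : ℤ) with hYdef
    have hYcast : ((Y : ℤ) : ZMod (p ^ s)) = (y : ZMod (p ^ s)) := by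
      rw [hYdef]
      push_cast
      exact ZMod.natCast_rightInverse _
    -- Y = 1 + p^a t
    have hYa : ((Y : ℤ) : ZMod (p ^ a)) = 1 := by
      have h2 : (ZMod.castHom hdvd (ZMod (p ^ a))) ((y : ZMod (p ^ s))) = 1 := by
        have := congrArg (fun u : (ZMod (p ^ a))ˣ => (u : ZMod (p ^ a))) hy1
        simpa [ZMod.unitsMap_def] using this
      calc ((Y : ℤ) : ZMod (p ^ a))
          = (ZMod.castHom hdvd (ZMod (p ^ a))) (((Y : ℤ) : ZMod (p ^ s))) := by
            simp
        _ = 1 := by rw [hYcast, h2]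
    obtain ⟨t, ht⟩ : ∃ t : ℤ, Y = 1 + (p : ℤ) ^ a * t := by
      have h3 : ((Y - 1 : ℤ) : ZMod (p ^ a)) = 0 := by push_cast [hYa]; ring
      rw [ZMod.intCast_zmod_eq_zero_iff_dvd] at h3
      obtain ⟨t, ht⟩ := h3
      exact ⟨t, by push_cast at ht ⊢; linarith⟩
    -- Y is a unit mod p^b
    have hYunit : IsUnit ((Y : ℤ) : ZMod (p ^ b)) := by
      have hu : IsUnit (((y : ZMod (p ^ s)).val : ZMod (p ^ s))) := by
        rw [ZMod.natCast_rightInverse _]; exact y.isUnit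
      rw [ZMod.isUnit_iff_coprime] at hu
      have hcop : Nat.Coprime (y : ZMod (p ^ s)).val p :=
        (Nat.coprime_pow_right_iff hs _ _).mp hu
      have : IsUnit (((y : ZMod (p ^ s)).val : ZMod (p ^ b))) := by
        rw [ZMod.isUnit_iff_coprime]; exact hcop.pow_right b
      simpa [hYdef] using this
    obtain ⟨Yu, hYu⟩ := hYunit
    -- the sum as a sum over ZMod (p^b)
    set f : ZMod (p ^ b) → ℂ :=
      fun v => ψ (((x + (p : ℤ) ^ a * ((v.val : ℕ) : ℤ)) : ℤ) : ZMod (p ^ s)) with hf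
    have hsum : ∑ u ∈ Finset.range (p ^ b),
        ψ (((x + (p : ℤ) ^ a * (u : ℤ)) : ℤ) : ZMod (p ^ s)) = ∑ v : ZMod (p ^ b), f v := by
      refine Finset.sum_nbij' (fun u => ((u : ℕ) : ZMod (p ^ b))) (fun v => v.val) ?_ ?_ ?_ ?_ ?_
      · intro u hu; exact Finset.mem_univ _
      · intro v _; simpa [Finset.mem_range] using ZMod.val_lt v
      · intro u hu
        rw [Finset.mem_range] at hu
        exact ZMod.val_cast_of_lt hu
      · intro v _; exact ZMod.natCast_rightInverse v
      · intro u hu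
        rw [Finset.mem_range] at hu
        simp only [hf, ZMod.val_cast_of_lt hu]
    rw [hsum]
    -- the affine bijection v ↦ t x + Y v
    set e : ZMod (p ^ b) ≃ ZMod (p ^ b) :=
      { toFun := fun v => ((t * x : ℤ) : ZMod (p ^ b)) + (Yu : ZMod (p ^ b)) * v
        invFun := fun w => ((Yu⁻¹ : (ZMod (p ^ b))ˣ) : ZMod (p ^ b)) *
            (w - ((t * x : ℤ) : ZMod (p ^ b)))
        left_inv := fun v => by
          show ((Yu⁻¹ : (ZMod (p ^ b))ˣ) : ZMod (p ^ b)) *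
              ((((t * x : ℤ) : ZMod (p ^ b)) + (Yu : ZMod (p ^ b)) * v) -
                ((t * x : ℤ) : ZMod (p ^ b))) = v
          rw [add_sub_cancel_left, ← mul_assoc, Units.inv_mul, one_mul]
        right_inv := fun w => by
          show ((t * x : ℤ) : ZMod (p ^ b)) + (Yu : ZMod (p ^ b)) *
              (((Yu⁻¹ : (ZMod (p ^ b))ˣ) : ZMod (p ^ b)) *
                (w - ((t * x : ℤ) : ZMod (p ^ b)))) = w
          rw [← mul_assoc, Units.mul_inv, one_mul]
          ring } with he
    -- key identity
    have hkey : ∀ v : ZMod (p ^ b), f (e v) = ψ ((y : ZMod (p ^ s))) * f v := by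
      intro v
      have hmain : (((x + (p : ℤ) ^ a * (((e v).val : ℕ) : ℤ)) : ℤ) : ZMod (p ^ s)) =
          ((Y : ℤ) : ZMod (p ^ s)) * (((x + (p : ℤ) ^ a * ((v.val : ℕ) : ℤ)) : ℤ) : ZMod (p ^ s)) := by
        have hD : ((p : ℤ) ^ b) ∣ (((e v).val : ℤ) - (t * x + Y * (v.val : ℤ))) := by
          rw [show ((p : ℤ) ^ b) = ((p ^ b : ℕ) : ℤ) by push_cast; ring,
            ← ZMod.intCast_zmod_eq_zero_iff_dvd]
          push_cast
          have h4 : (((e v).val : ℕ) : ZMod (p ^ b)) = e v := ZMod.natCast_rightInverse _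
          have h5 : ((Y : ℤ) : ZMod (p ^ b)) = (Yu : ZMod (p ^ b)) := by
            simpa [hYdef] using hYu.symm
          have h6 : (((v.val : ℕ) : ℤ) : ZMod (p ^ b)) = v := by
            push_cast
            exact ZMod.natCast_rightInverse _
          push_cast at h4 h5 h6
          rw [h4, h5, h6]
          show (((t * x : ℤ) : ZMod (p ^ b)) + (Yu : ZMod (p ^ b)) * v) -
              ((t : ZMod (p^b)) * (x : ZMod (p^b)) + _) = 0
          push_cast
          ring
        obtain ⟨D, hD⟩ := hD
        have hint : (x + (p : ℤ) ^ a * (((e v).val : ℕ) : ℤ)) -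
            Y * (x + (p : ℤ) ^ a * ((v.val : ℕ) : ℤ)) = (p : ℤ) ^ a * ((p : ℤ) ^ b * D) := by
          rw [← hD, ht]; push_cast; ring
        have hdvds : ((p : ℤ) ^ s) ∣ ((p : ℤ) ^ a * ((p : ℤ) ^ b * D)) := by
          have : ((p : ℤ) ^ s) ∣ ((p : ℤ) ^ (a + b)) := pow_dvd_pow _ hab
          rw [pow_add] at this
          exact this.trans ⟨D, by ring⟩
        have h7 : (((x + (p : ℤ) ^ a * (((e v).val : ℕ) : ℤ)) -
            Y * (x + (p : ℤ) ^ a * ((v.val : ℕ) : ℤ)) : ℤ) : ZMod (p ^ s)) = 0 := by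
          rw [hint, ZMod.intCast_zmod_eq_zero_iff_dvd]
          exact_mod_cast hdvds
        push_cast at h7 ⊢
        linear_combination h7
      rw [hf]
      simp only []
      rw [hmain, hYcast, map_mul]
    have hstep : ψ ((y : ZMod (p ^ s))) * ∑ v : ZMod (p ^ b), f v = ∑ v : ZMod (p ^ b), f v := by
      rw [Finset.mul_sum]
      calc ∑ v : ZMod (p ^ b), ψ ((y : ZMod (p ^ s))) * f v
          = ∑ v : ZMod (p ^ b), f (e v) := by
            refine Finset.sum_congr rfl fun v _ => (hkey v).symm
        _ = ∑ v : ZMod (p ^ b), f v := Equiv.sum_comp e f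
    have hne : ψ ((y : ZMod (p ^ s))) ≠ 1 := by
      intro hone
      apply hyψ
      ext
      rw [MulChar.coe_toUnitHom]
      simpa using hone
    have := sub_eq_zero.mpr hstep
    rw [← sub_one_mul] at this
    rcases mul_eq_zero.mp this with h | h
    · exact absurd (by linear_combination h : ψ ((y : ZMod (p ^ s))) = 1) hne
    · exact h
end

section
/- Let p be an odd prime and e ≥ 1. Suppose n ∈ {1, -1} and t ∈ ℤ are such that t² - 4n is not a perfect square, and write t² - 4n = d·ℓ² with d a fundamental discriminant and ℓ > 0. Then there exists a matrix T in M₂(ℤ) with lower-left entry divisible by p^e, det(T) = n, and tr(T) = t, if and only if: ord_p(ℓ) ≥ ⌈e/2⌉, or d is a quadratic residue modulo p, or (e is odd, ord_p(ℓ) ≥ ⌊e/2⌋, and p divides d). -/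
/-- A fundamental discriminant: `d ≡ 1 mod 4`, squarefree and `d ≠ 1`, or
`d ≡ 0 mod 4` with `d/4` squarefree and `d/4 ≢ 1 mod 4`. -/
def IsFundamentalDiscriminant (d : ℤ) : Prop :=
  (d % 4 = 1 ∧ Squarefree d ∧ d ≠ 1) ∨
    (d % 4 = 0 ∧ Squarefree (d / 4) ∧ (d / 4) % 4 ≠ 1)

private lemma exists_sq_mod_p' (p : ℕ) [hp : Fact p.Prime] (u : ℤ)
    (h : IsSquare ((u : ZMod p))) : ∃ x : ℤ, (p:ℤ) ∣ x ^ 2 - u := by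
  obtain ⟨r, hr⟩ := h
  obtain ⟨x, rfl⟩ := ZMod.intCast_surjective r
  refine ⟨x, ?_⟩
  rw [← ZMod.intCast_zmod_eq_zero_iff_dvd]
  push_cast
  rw [hr]; ring

private lemma hensel_sq' (p : ℕ) [hp : Fact p.Prime] (hp2 : p ≠ 2) (u : ℤ)
    (hu : ¬ (p:ℤ) ∣ u) (h1 : ∃ x : ℤ, (p:ℤ) ∣ x ^ 2 - u) :
    ∀ e : ℕ, 1 ≤ e → ∃ x : ℤ, (p:ℤ) ^ e ∣ x ^ 2 - u := by
  intro e he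
  induction e with
  | zero => omega
  | succ e ih =>
    rcases Nat.eq_zero_or_pos e with rfl | he'
    · simpa using h1
    obtain ⟨f, rfl⟩ : ∃ f, e = f + 1 := ⟨e - 1, by omega⟩
    obtain ⟨x, m, hm⟩ := ih (by omega)
    have hpx : ¬ (p:ℤ) ∣ x := by
      intro hdvd
      apply hu
      have h2 : (p:ℤ) ∣ x ^ 2 - u := by
        rw [hm]; exact Dvd.dvd.mul_right (dvd_pow_self _ (by omega)) m
      have h3 : (p:ℤ) ∣ x ^ 2 := by
        rw [sq]; exact hdvd.mul_left x
      simpa using dvd_sub h3 h2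
    have hprime : Prime (p : ℤ) := Nat.prime_iff_prime_int.mp hp.out
    have hp2' : ¬ (p:ℤ) ∣ 2 := by
      intro h
      have : p ∣ 2 := by exact_mod_cast h
      exact hp2 ((Nat.prime_dvd_prime_iff_eq hp.out Nat.prime_two).mp this)
    have hc : IsCoprime ((p:ℤ)) (2 * x) := by
      rw [Prime.coprime_iff_not_dvd hprime]
      intro h
      rcases hprime.dvd_mul.mp h with h | h
      · exact hp2' h
      · exact hpx h
    obtain ⟨A, B, hAB⟩ := hc
    set s : ℤ := -(m * B) with hs
    refine ⟨x + (p:ℤ) ^ (f+1) * s, m * A + (p:ℤ) ^ f * s ^ 2, ?_⟩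
    have key : (x + (p:ℤ) ^ (f+1) * s) ^ 2 - u
        = (p:ℤ) ^ (f+2) * (m * A) + (p:ℤ) ^ (f+2) * ((p:ℤ) ^ f * s ^ 2) := by
      have h2e : (p:ℤ) ^ (f+2) * (p:ℤ) ^ f = (p:ℤ) ^ (f+1) * (p:ℤ) ^ (f+1) := by
        rw [← pow_add, ← pow_add]; congr 1; omega
      rw [hs]
      linear_combination hm - (p:ℤ) ^ (f+1) * m * hAB + s ^ 2 * h2e
    rw [key, mul_add]

private lemma sq_mod_pow_iff' (p : ℕ) [hp : Fact p.Prime] (hp2 : p ≠ 2) (e : ℕ) (he : 1 ≤ e)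
    (k : ℕ) (u D : ℤ) (hu : ¬(p:ℤ) ∣ u) (hD : D = (p:ℤ) ^ k * u) :
    (∃ x : ℤ, (p:ℤ) ^ e ∣ x ^ 2 - D) ↔ (e ≤ k ∨ (Even k ∧ IsSquare ((u : ZMod p)))) := by
  have hpne : (p:ℤ) ≠ 0 := by exact_mod_cast hp.out.ne_zero
  have helper : ∀ z : ℤ, (p:ℤ) ^ (k+1) ∣ (p:ℤ) ^ k * z → (p:ℤ) ∣ z := by
    intro z h
    rwa [pow_succ, mul_dvd_mul_iff_left (pow_ne_zero _ hpne)] at h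
  constructor
  · rintro ⟨x, hx⟩
    by_cases hek : e ≤ k
    · exact Or.inl hek
    right
    push_neg at hek
    have hk2 : (p:ℤ) ^ (k+1) ∣ x ^ 2 - D := (pow_dvd_pow _ (by omega)).trans hx
    have hx0 : x ≠ 0 := by
      rintro rfl
      apply hu
      apply helper
      rw [← hD]
      simpa using hk2
    have hk1 : (p:ℤ) ^ k ∣ x ^ 2 := by
      have h1 : (p:ℤ) ^ k ∣ D := hD ▸ dvd_mul_right _ _
      have h2 : (p:ℤ) ^ k ∣ x ^ 2 - D := (pow_dvd_pow _ (by omega)).trans hx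
      simpa using dvd_add h2 h1
    have hk1' : ¬ (p:ℤ) ^ (k+1) ∣ x ^ 2 := by
      intro h
      apply hu
      apply helper
      rw [← hD]
      simpa using dvd_sub h hk2
    set N := x.natAbs with hNdef
    have hN0 : N ≠ 0 := Int.natAbs_ne_zero.mpr hx0
    have hxN : (x ^ 2 : ℤ) = ((N ^ 2 : ℕ) : ℤ) := by
      push_cast
      rw [Int.natAbs_sq]
    have hN2 : (N ^ 2 : ℕ) ≠ 0 := pow_ne_zero _ hN0
    have hkn : p ^ k ∣ N ^ 2 := by
      rw [← Int.natCast_dvd_natCast]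
      push_cast
      rw [Int.natAbs_sq]
      exact_mod_cast hk1
    have hkn' : ¬ p ^ (k+1) ∣ N ^ 2 := by
      intro h
      apply hk1'
      rw [hxN]
      exact_mod_cast Int.natCast_dvd_natCast.mpr h
    rw [Nat.Prime.pow_dvd_iff_le_factorization hp.out (n := N ^ 2) hN2] at hkn
    rw [Nat.Prime.pow_dvd_iff_le_factorization hp.out (n := N ^ 2) hN2] at hkn'
    rw [Nat.factorization_pow, Finsupp.smul_apply, smul_eq_mul] at hkn hkn'
    set v := N.factorization p with hvdef
    have hk2v : k = 2 * v := by omega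
    refine ⟨⟨v, by omega⟩, ?_⟩
    set M := N / p ^ v with hMdef
    have hNM : p ^ v * M = N := Nat.ordProj_mul_ordCompl_eq_self N p
    have hpM : ¬ p ∣ M := Nat.not_dvd_ordCompl hp.out hN0
    have hx2 : (x ^ 2 : ℤ) = (p:ℤ) ^ k * (M:ℤ) ^ 2 := by
      rw [hxN, ← hNM, hk2v]
      push_cast
      ring
    have hdvd : (p:ℤ) ∣ (M:ℤ) ^ 2 - u := by
      apply helper
      have : (p:ℤ) ^ k * ((M:ℤ) ^ 2 - u) = x ^ 2 - D := by
        rw [hx2, hD]; ring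
      rw [this]
      exact hk2
    have hcast : ((M : ZMod p)) ^ 2 = (u : ZMod p) := by
      have h0 : (((M:ℤ) ^ 2 - u : ℤ) : ZMod p) = 0 :=
        (ZMod.intCast_zmod_eq_zero_iff_dvd _ p).mpr hdvd
      push_cast at h0
      linear_combination h0
    exact ⟨(M : ZMod p), by rw [← hcast, sq]⟩
  · rintro (hek | ⟨⟨w, hw⟩, hsq⟩)
    · refine ⟨0, ?_⟩
      rw [hD]
      simpa using (dvd_mul_of_dvd_left (pow_dvd_pow _ hek) u)
    · obtain ⟨y, hy⟩ := hensel_sq' p hp2 u hu (exists_sq_mod_p' p u hsq) e he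
      refine ⟨(p:ℤ) ^ w * y, ?_⟩
      have : ((p:ℤ) ^ w * y) ^ 2 - D = (p:ℤ) ^ (w + w) * (y ^ 2 - u) := by
        rw [hD, hw]; ring
      rw [this]
      exact hy.mul_left _

/-- Let `p` be an odd prime and `e ≥ 1`. Suppose `n ∈ {1, -1}` and `t ∈ ℤ`
are such that `t² - 4n` is not a perfect square, and write `t² - 4n = d·ℓ²` with `d` a
fundamental discriminant and `ℓ > 0`. Then there exists a matrix `T ∈ M₂(ℤ)` with lower-left
entry divisible by `p^e`, `det T = n` and `tr T = t`, if and only if: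
`ord_p(ℓ) ≥ ⌈e/2⌉`, or `d` is a quadratic residue modulo `p` (Legendre symbol `1`), or
(`e` is odd, `ord_p(ℓ) ≥ ⌊e/2⌋`, and `p ∣ d`). -/
theorem exists_matrix_level_iff (p : ℕ) [hp : Fact p.Prime] (hp2 : p ≠ 2)
    (e : ℕ) (he : 1 ≤ e) (n t : ℤ) (hn : n = 1 ∨ n = -1)
    (hns : ¬IsSquare (t ^ 2 - 4 * n))
    (d : ℤ) (ℓ : ℕ) (hℓ : 0 < ℓ) (hd : IsFundamentalDiscriminant d)
    (hdec : t ^ 2 - 4 * n = d * (ℓ : ℤ) ^ 2) :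
    (∃ T : Matrix (Fin 2) (Fin 2) ℤ,
        ((p : ℤ) ^ e ∣ T 1 0) ∧ T.det = n ∧ T.trace = t) ↔
      ((e + 1) / 2 ≤ padicValNat p ℓ ∨ legendreSym p d = 1 ∨
        (Odd e ∧ e / 2 ≤ padicValNat p ℓ ∧ (p : ℤ) ∣ d)) := by
  have hprime : Prime (p : ℤ) := Nat.prime_iff_prime_int.mp hp.out
  -- Step A
  have hmat : (∃ T : Matrix (Fin 2) (Fin 2) ℤ,
      ((p : ℤ) ^ e ∣ T 1 0) ∧ T.det = n ∧ T.trace = t) ↔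
      ∃ a : ℤ, (p:ℤ) ^ e ∣ a * (t - a) - n := by
    constructor
    · rintro ⟨T, hc, hdet, htr⟩
      refine ⟨T 0 0, ?_⟩
      rw [Matrix.det_fin_two] at hdet
      rw [Matrix.trace_fin_two] at htr
      have key : T 0 0 * (t - T 0 0) - n = T 0 1 * T 1 0 := by
        linear_combination hdet - T 0 0 * htr
      rw [key]
      exact hc.mul_left _
    · rintro ⟨a, m, hm⟩
      refine ⟨!![a, m; (p:ℤ) ^ e, t - a], ?_, ?_, ?_⟩
      · simp
      · rw [Matrix.det_fin_two_of]; linarith [hm]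
      · rw [Matrix.trace_fin_two]; simp
  -- Step B
  have hstepB : (∃ a : ℤ, (p:ℤ) ^ e ∣ a * (t - a) - n) ↔
      ∃ x : ℤ, (p:ℤ) ^ e ∣ x ^ 2 - (t ^ 2 - 4 * n) := by
    have hodd : Odd ((p:ℤ) ^ e) :=
      ((Int.odd_coe_nat p).mpr (hp.out.odd_of_ne_two hp2)).pow
    constructor
    · rintro ⟨a, ha⟩
      refine ⟨t - 2 * a, ?_⟩
      have : (t - 2 * a) ^ 2 - (t ^ 2 - 4 * n) = -4 * (a * (t - a) - n) := by ring
      rw [this]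
      exact ha.mul_left _
    · rintro ⟨x, hx⟩
      have hpar : ∃ x' : ℤ, 2 ∣ t - x' ∧ (p:ℤ) ^ e ∣ x' ^ 2 - (t ^ 2 - 4 * n) := by
        rcases Int.even_or_odd (t - x) with h | h
        · exact ⟨x, h.two_dvd, hx⟩
        · refine ⟨x + (p:ℤ) ^ e, ?_, ?_⟩
          · have h2 : Even (t - x - (p:ℤ) ^ e) := h.sub_odd hodd
            have h3 : t - (x + (p:ℤ) ^ e) = t - x - (p:ℤ) ^ e := by ring
            rw [h3]
            exact h2.two_dvd
          · have h3 : (x + (p:ℤ) ^ e) ^ 2 - (t ^ 2 - 4 * n)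
                = (x ^ 2 - (t ^ 2 - 4 * n)) + (p:ℤ) ^ e * (2 * x + (p:ℤ) ^ e) := by ring
            rw [h3]
            exact dvd_add hx (dvd_mul_right _ _)
      obtain ⟨x', ⟨a, ha⟩, hx'⟩ := hpar
      refine ⟨a, ?_⟩
      have h4 : (4:ℤ) * (a * (t - a) - n) = -(x' ^ 2 - (t ^ 2 - 4 * n)) := by
        have hx'' : x' = t - 2 * a := by omega
        rw [hx'']; ring
      have hcop : IsCoprime ((p:ℤ) ^ e) 4 := by
        have h2 : IsCoprime ((p:ℤ)) 2 := by
          rw [Prime.coprime_iff_not_dvd hprime]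
          intro h
          have : p ∣ 2 := by exact_mod_cast h
          exact hp2 ((Nat.prime_dvd_prime_iff_eq hp.out Nat.prime_two).mp this)
        have := h2.pow (m := e) (n := 2)
        norm_num at this
        exact this
      exact hcop.dvd_of_dvd_mul_left (by rw [h4]; exact dvd_neg.mpr hx')
  rw [hmat, hstepB]
  -- Step C
  obtain ⟨v', M, hpM, hℓeq⟩ : ∃ v' M, ¬ p ∣ M ∧ ℓ = p ^ v' * M :=
    let ⟨v', M, h1, h2⟩ := Nat.exists_eq_pow_mul_and_not_dvd hℓ.ne' p hp.out.ne_one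
    ⟨v', M, h1, h2⟩
  have hM0 : M ≠ 0 := by
    rintro rfl
    simp at hℓeq
    omega
  have hv : padicValNat p ℓ = v' := by
    rw [hℓeq, padicValNat.mul (pow_ne_zero _ hp.out.ne_zero) hM0,
      padicValNat.prime_pow, padicValNat.eq_zero_of_not_dvd hpM, add_zero]
  have hpM' : ¬ (p:ℤ) ∣ (M:ℤ) := by
    intro h
    exact hpM (by exact_mod_cast h)
  have hp2d : ¬ ((p:ℤ) * (p:ℤ)) ∣ d := by
    have hunit : ¬ IsUnit ((p:ℤ)) := hprime.not_unit
    rcases hd with ⟨-, hsf, -⟩ | ⟨h4, hsf, -⟩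
    · intro h
      exact hunit (hsf _ h)
    · intro h
      have h4' : (4:ℤ) ∣ d := Int.dvd_of_emod_eq_zero h4
      have hdd : 4 * (d / 4) = d := Int.mul_ediv_cancel' h4'
      have hcop4 : IsCoprime ((p:ℤ) * (p:ℤ)) 4 := by
        have h2 : IsCoprime ((p:ℤ)) 2 := by
          rw [Prime.coprime_iff_not_dvd hprime]
          intro h
          have : p ∣ 2 := by exact_mod_cast h
          exact hp2 ((Nat.prime_dvd_prime_iff_eq hp.out Nat.prime_two).mp this)
        have := h2.pow (m := 2) (n := 2)
        norm_num [sq] at this ⊢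
        exact this
      have : ((p:ℤ) * (p:ℤ)) ∣ d / 4 := hcop4.dvd_of_dvd_mul_left (by rw [hdd]; exact h)
      exact hunit (hsf _ this)
  by_cases hpd : (p:ℤ) ∣ d
  · -- p ∣ d
    obtain ⟨d₀, hdd⟩ := hpd
    have hpd₀ : ¬ (p:ℤ) ∣ d₀ := by
      intro h
      exact hp2d (hdd ▸ mul_dvd_mul_left _ h)
    have hu : ¬ (p:ℤ) ∣ d₀ * (M:ℤ) ^ 2 := by
      intro h
      rcases hprime.dvd_mul.mp h with h | h
      · exact hpd₀ h
      · exact hpM' (hprime.dvd_of_dvd_pow h)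
    have hDk : t ^ 2 - 4 * n = (p:ℤ) ^ (2 * v' + 1) * (d₀ * (M:ℤ) ^ 2) := by
      rw [hdec, hdd, hℓeq]
      push_cast
      ring
    rw [hDk, sq_mod_pow_iff' p hp2 e he (2 * v' + 1) _ _ hu rfl]
    have hleg : legendreSym p d = 0 :=
      (legendreSym.eq_zero_iff p d).mpr
        ((ZMod.intCast_zmod_eq_zero_iff_dvd d p).mpr ⟨d₀, hdd⟩)
    have heven : ¬ Even (2 * v' + 1) := by simp [Nat.even_add_one, parity_simps]
    rw [hv]
    constructor
    · rintro (h | ⟨h, -⟩)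
      · rcases (by omega : e ≤ 2 * v' ∨ (e % 2 = 1 ∧ e / 2 ≤ v')) with h' | ⟨h1, h2⟩
        · exact Or.inl (by omega)
        · exact Or.inr (Or.inr ⟨Nat.odd_iff.mpr h1, h2, ⟨d₀, hdd⟩⟩)
      · exact absurd h heven
    · rintro (h | h | ⟨ho, h2, -⟩)
      · exact Or.inl (by omega)
      · rw [hleg] at h; exact absurd h (by norm_num)
      · rw [Nat.odd_iff] at ho
        exact Or.inl (by omega)
  · -- p ∤ d
    have hu : ¬ (p:ℤ) ∣ d * (M:ℤ) ^ 2 := by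
      intro h
      rcases hprime.dvd_mul.mp h with h | h
      · exact hpd h
      · exact hpM' (hprime.dvd_of_dvd_pow h)
    have hDk : t ^ 2 - 4 * n = (p:ℤ) ^ (2 * v') * (d * (M:ℤ) ^ 2) := by
      rw [hdec, hℓeq]
      push_cast
      ring
    rw [hDk, sq_mod_pow_iff' p hp2 e he (2 * v') _ _ hu rfl]
    have hd0' : ((d : ZMod p)) ≠ 0 := by
      rw [Ne, ZMod.intCast_zmod_eq_zero_iff_dvd]
      exact hpd
    have hM0' : ((M : ZMod p)) ≠ 0 := by
      rw [Ne, ZMod.natCast_eq_zero_iff]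
      exact hpM
    have hsq_iff : IsSquare (((d * (M:ℤ) ^ 2 : ℤ) : ZMod p)) ↔ legendreSym p d = 1 := by
      rw [legendreSym.eq_one_iff p hd0']
      push_cast
      constructor
      · rintro ⟨r, hr⟩
        refine ⟨r * (M : ZMod p)⁻¹, ?_⟩
        field_simp
        linear_combination hr
      · rintro ⟨r, hr⟩
        exact ⟨r * (M : ZMod p), by rw [hr]; ring⟩
    rw [hsq_iff, hv]
    have heven : Even (2 * v') := even_two_mul v'
    constructor
    · rintro (h | ⟨-, h⟩)
      · exact Or.inl (by omega)
      · exact Or.inr (Or.inl h)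
    · rintro (h | h | ⟨-, -, hcon⟩)
      · exact Or.inl (by omega)
      · exact Or.inr ⟨heven, h⟩
      · exact absurd hcon hpd
end

section
/- Let p be an odd prime, α ≥ 1, n ∈ {±1}, t ∈ ℤ with t² - 4n = d·ℓ² (d a fundamental discriminant, ℓ > 0). If ord_p(t² - 4n) ≥ α, then the set of ξ ∈ ℤ_p with ξ² - tξ + n ≡ 0 mod p^α equals { t/2 + p^{⌈α/2⌉}·u : u ∈ ℤ_p }. -/
namespace PadicInt

variable {p : ℕ} [Fact p.Prime]

lemma isUnit_natCast_iff {m : ℕ} : IsUnit (m : ℤ_[p]) ↔ p.Coprime m := by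
  rw [isUnit_iff, norm_natCast_eq_one_iff]

lemma pow_dvd_sq_iff (x : ℤ_[p]) (α : ℕ) :
    (p : ℤ_[p]) ^ α ∣ x ^ 2 ↔ (p : ℤ_[p]) ^ ((α + 1) / 2) ∣ x := by
  rcases eq_or_ne x 0 with rfl | hx
  · simp
  rw [← Ideal.mem_span_singleton, ← Ideal.mem_span_singleton,
    mem_span_pow_iff_le_valuation _ (pow_ne_zero 2 hx), mem_span_pow_iff_le_valuation _ hx,
    valuation_pow]
  omega

end PadicInt

section CompleteSquare

variable {R : Type*} [CommRing R]

lemma dvd_quadratic_iff_dvd_sq_of_dvd_discr {q t n ξ : R} (h2 : IsUnit (2 : R))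
    (hq : q ∣ t ^ 2 - 4 * n) : q ∣ ξ ^ 2 - t * ξ + n ↔ q ∣ (2 * ξ - t) ^ 2 := by
  have h4 : IsUnit (4 : R) := by simpa only [show (2 : R) * 2 = 4 by norm_num] using h2.mul h2
  rw [← h4.dvd_mul_left, show 4 * (ξ ^ 2 - t * ξ + n) = (2 * ξ - t) ^ 2 - (t ^ 2 - 4 * n) by ring]
  exact dvd_sub_left hq

lemma exists_two_mul_eq_add_two_mul_iff_dvd {m t ξ : R} (h2 : IsUnit (2 : R)) :
    (∃ u, 2 * ξ = t + 2 * m * u) ↔ m ∣ 2 * ξ - t := by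
  constructor
  · rintro ⟨u, hu⟩
    exact ⟨2 * u, by rw [hu]; ring⟩
  · rintro ⟨c, hc⟩
    refine ⟨↑h2.unit⁻¹ * c, ?_⟩
    linear_combination hc - m * c * h2.mul_val_inv

end CompleteSquare

theorem padic_roots_high_valuation_general (p : ℕ) [hp : Fact p.Prime] (hp2 : p ≠ 2)
    (α : ℕ) (n t : ℤ)
    (hval : (p : ℤ) ^ α ∣ (t ^ 2 - 4 * n)) :
    {ξ : ℤ_[p] | (p : ℤ_[p]) ^ α ∣ (ξ ^ 2 - (t : ℤ_[p]) * ξ + (n : ℤ_[p]))} =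
      {ξ : ℤ_[p] | ∃ u : ℤ_[p],
        2 * ξ = (t : ℤ_[p]) + 2 * (p : ℤ_[p]) ^ ((α + 1) / 2) * u} := by
  have h2 : IsUnit (2 : ℤ_[p]) := by
    exact_mod_cast PadicInt.isUnit_natCast_iff.2 ((Nat.coprime_primes hp.out Nat.prime_two).2 hp2)
  have hdisc : (p : ℤ_[p]) ^ α ∣ (t : ℤ_[p]) ^ 2 - 4 * n := by
    exact_mod_cast map_dvd (Int.castRingHom ℤ_[p]) hval
  ext ξ
  rw [Set.mem_ofPred_eq, Set.mem_ofPred_eq, dvd_quadratic_iff_dvd_sq_of_dvd_discr h2 hdisc,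
    PadicInt.pow_dvd_sq_iff, exists_two_mul_eq_add_two_mul_iff_dvd h2]

/-- Let `p` be an odd prime, `α ≥ 1`, `n ∈ {±1}`, `t ∈ ℤ` with
`t² - 4n = d·ℓ²` (`d` a fundamental discriminant, `ℓ > 0`). If `ord_p(t² - 4n) ≥ α`
(equivalently `p^α ∣ t² - 4n`), then the set of `ξ ∈ ℤ_p` with `ξ² - tξ + n ≡ 0 mod p^α`
equals `{ t/2 + p^{⌈α/2⌉}·u : u ∈ ℤ_p }` (written via `2ξ = t + 2·p^{⌈α/2⌉}·u`, since `2`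
is a unit in `ℤ_p`). -/
theorem padic_roots_high_valuation (p : ℕ) [hp : Fact p.Prime] (hp2 : p ≠ 2)
    (α : ℕ) (hα : 1 ≤ α) (n t : ℤ) (hn : n = 1 ∨ n = -1)
    (d : ℤ) (ℓ : ℕ) (hℓ : 0 < ℓ) (hd : IsFundamentalDiscriminant d)
    (hdec : t ^ 2 - 4 * n = d * (ℓ : ℤ) ^ 2)
    (hval : (p : ℤ) ^ α ∣ (t ^ 2 - 4 * n)) :
    {ξ : ℤ_[p] | (p : ℤ_[p]) ^ α ∣ (ξ ^ 2 - (t : ℤ_[p]) * ξ + (n : ℤ_[p]))} =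
      {ξ : ℤ_[p] | ∃ u : ℤ_[p],
        2 * ξ = (t : ℤ_[p]) + 2 * (p : ℤ_[p]) ^ ((α + 1) / 2) * u} :=
  padic_roots_high_valuation_general p (hp := hp) hp2 α n t hval
end

section
/- Let p be an odd prime, α ≥ 1, n ∈ {±1}, t ∈ ℤ with t² - 4n = d·ℓ² (d a fundamental discriminant, ℓ > 0, t² - 4n not a square). If ord_p(t² - 4n) < α and d is a quadratic residue mod p (with (d/p) = 1), then the set of ξ ∈ ℤ_p satisfying ξ² - tξ + n ≡ 0 mod p^α equals { t/2 ± (√d)·ℓ/2 + p^{α - ord_p(ℓ)}·u : u ∈ ℤ_p }, where √d denotes a square root of d in ℤ_p. -/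
/-!
Since `t² - 4n = r²ℓ²`, completing the square gives
`4(ξ² - tξ + n) = (2ξ - t - rℓ)(2ξ - t + rℓ)`, and `4` is a unit in `ℤ_p`. The two factors
differ by `2rℓ`, of norm `p^{-m}` with `m = ord_p ℓ`, because `2` and `r` are units.
For `x, z ∈ ℤ_p` with `‖x - z‖ = p^{-m}` and `2m < α`, ultrametricity gives
`max(‖x‖, ‖z‖) ≥ p^{-m}`, so `p^α ∣ xz` forces the factor of smaller norm to be divisible by
`p^{α-m}`; conversely `p^{α-m} ∣ x` and `p^m ∣ x - z` give `p^m ∣ z`.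
As `(d/p) = 1` means `p ∤ d`, `ord_p(t² - 4n) = 2m`, so the hypothesis on it reads `2m < α`.
-/

theorem pow_dvd_mul_of_pow_dvd_sub {R : Type*} [CommRing R] {π x z : R} {m α : ℕ}
    (hmα : 2 * m ≤ α) (hxz : π ^ m ∣ x - z) (hx : π ^ (α - m) ∣ x) : π ^ α ∣ x * z := by
  have hxm : π ^ m ∣ x := (pow_dvd_pow π (by omega)).trans hx
  have hzm : π ^ m ∣ z := by simpa using dvd_sub hxm hxz
  simpa [← pow_add, Nat.sub_add_cancel (by omega : m ≤ α)] using mul_dvd_mul hx hzm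

theorem IsUltrametricDist.norm_le_or_norm_le_of_norm_mul_le {R : Type*} [NormedRing R]
    [NormMulClass R] [IsUltrametricDist R] {x z : R} {c : ℝ} (hxz : x ≠ z)
    (h : ‖x * z‖ ≤ ‖x - z‖ * c) : ‖x‖ ≤ c ∨ ‖z‖ ≤ c := by
  wlog hle : ‖x‖ ≤ ‖z‖ generalizing x z
  · refine (this hxz.symm ?_ (le_of_not_ge hle)).symm
    rwa [norm_mul, mul_comm ‖z‖, ← norm_mul, norm_sub_rev]
  left
  have hpos : 0 < ‖x - z‖ := norm_pos_iff.mpr (sub_ne_zero.mpr hxz)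
  have hmax : ‖x - z‖ ≤ ‖z‖ := by
    simpa [sub_eq_add_neg, max_eq_right hle] using norm_add_le_max x (-z)
  refine le_of_mul_le_mul_left ?_ hpos
  calc ‖x - z‖ * ‖x‖ ≤ ‖z‖ * ‖x‖ := by gcongr
    _ = ‖x * z‖ := by rw [norm_mul, mul_comm]
    _ ≤ ‖x - z‖ * c := h

theorem padicValInt_mul_sq_of_not_dvd {p : ℕ} [Fact p.Prime] {d : ℤ} {ℓ : ℕ}
    (hd : ¬(p : ℤ) ∣ d) (hℓ : ℓ ≠ 0) :
    padicValInt p (d * (ℓ : ℤ) ^ 2) = 2 * padicValNat p ℓ := by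
  have hd0 : d ≠ 0 := by rintro rfl; exact hd (dvd_zero _)
  rw [padicValInt.mul hd0 (by positivity), padicValInt.eq_zero_of_not_dvd hd, zero_add,
    ← Nat.cast_pow, padicValInt.of_nat, padicValNat.pow ℓ 2]

namespace PadicInt

variable {p : ℕ} [Fact p.Prime]

theorem pow_dvd_iff_norm_le {x : ℤ_[p]} {k : ℕ} :
    (p : ℤ_[p]) ^ k ∣ x ↔ ‖x‖ ≤ (p : ℝ) ^ (-k : ℤ) :=
  Ideal.mem_span_singleton.symm.trans (norm_le_pow_iff_mem_span_pow x k).symm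

theorem norm_two (hp2 : p ≠ 2) : ‖(2 : ℤ_[p])‖ = 1 := by
  exact_mod_cast norm_natCast_eq_one_iff.mpr
    (Nat.coprime_two_right.mpr ((Fact.out : p.Prime).odd_of_ne_two hp2))

theorem norm_natCast_eq_zpow_neg_padicValNat {n : ℕ} (hn : n ≠ 0) :
    ‖(n : ℤ_[p])‖ = (p : ℝ) ^ (-(padicValNat p n : ℤ)) := by
  rw [norm_def, coe_natCast, Padic.norm_eq_zpow_neg_valuation (by exact_mod_cast hn),
    Padic.valuation_natCast]

theorem pow_dvd_mul_iff_of_norm_sub_eq {x z : ℤ_[p]} {m α : ℕ}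
    (hxz : ‖x - z‖ = (p : ℝ) ^ (-m : ℤ)) (hmα : 2 * m < α) :
    (p : ℤ_[p]) ^ α ∣ x * z ↔ (p : ℤ_[p]) ^ (α - m) ∣ x ∨ (p : ℤ_[p]) ^ (α - m) ∣ z := by
  have hm : (p : ℤ_[p]) ^ m ∣ x - z := pow_dvd_iff_norm_le.mpr hxz.le
  refine ⟨fun h => ?_, ?_⟩
  · have hne : x ≠ z := by
      rintro rfl
      exact (pow_pos (Nat.cast_pos.mpr (Fact.out : p.Prime).pos) m).ne (by simpa using hxz)
    simp only [pow_dvd_iff_norm_le] at h ⊢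
    refine IsUltrametricDist.norm_le_or_norm_le_of_norm_mul_le hne (h.trans_eq ?_)
    rw [hxz, ← zpow_add₀ (by exact_mod_cast (Fact.out : p.Prime).ne_zero)]
    push_cast [Nat.cast_sub (by omega : m ≤ α)]
    ring_nf
  · rintro (hx | hz)
    · exact pow_dvd_mul_of_pow_dvd_sub hmα.le hm hx
    · rw [mul_comm]
      exact pow_dvd_mul_of_pow_dvd_sub hmα.le (by rwa [← dvd_neg, neg_sub]) hz

end PadicInt

theorem padic_roots_low_valuation_general (p : ℕ) [hp : Fact p.Prime] (hp2 : p ≠ 2)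
    (α : ℕ) (n t : ℤ)
    (d : ℤ) (ℓ : ℕ) (hℓ : 0 < ℓ)
    (hdec : t ^ 2 - 4 * n = d * (ℓ : ℤ) ^ 2)
    (hval : padicValInt p (t ^ 2 - 4 * n) < α)
    (hleg : legendreSym p d = 1)
    (r : ℤ_[p]) (hr : r ^ 2 = (d : ℤ_[p])) :
    {ξ : ℤ_[p] | (p : ℤ_[p]) ^ α ∣ (ξ ^ 2 - (t : ℤ_[p]) * ξ + (n : ℤ_[p]))} =
      {ξ : ℤ_[p] | ∃ u : ℤ_[p],
        2 * ξ = (t : ℤ_[p]) + r * (ℓ : ℤ_[p]) +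
            2 * (p : ℤ_[p]) ^ (α - padicValNat p ℓ) * u ∨
        2 * ξ = (t : ℤ_[p]) - r * (ℓ : ℤ_[p]) +
            2 * (p : ℤ_[p]) ^ (α - padicValNat p ℓ) * u} := by
  set m := padicValNat p ℓ
  have hpd : ¬(p : ℤ) ∣ d := by
    rw [← ZMod.intCast_zmod_eq_zero_iff_dvd, ← legendreSym.eq_zero_iff, hleg]
    exact one_ne_zero
  have hm : 2 * m < α := by rwa [hdec, padicValInt_mul_sq_of_not_dvd hpd hℓ.ne'] at hval
  have hd1 : ‖(d : ℤ_[p])‖ = 1 :=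
    le_antisymm (PadicInt.norm_le_one _) (not_lt.mp (hpd ∘ PadicInt.norm_intCast_lt_one_iff.mp))
  have hr1 : ‖r‖ = 1 := by
    rwa [← pow_eq_one_iff_of_nonneg (norm_nonneg r) two_ne_zero, ← norm_pow, hr]
  have h2 : IsUnit (2 : ℤ_[p]) := PadicInt.isUnit_iff.mpr (PadicInt.norm_two hp2)
  have hdecp : (t : ℤ_[p]) ^ 2 - 4 * n = r ^ 2 * (ℓ : ℤ_[p]) ^ 2 := by
    rw [hr]; exact_mod_cast hdec
  ext ξ
  have hfactor : (2 * ξ - (t + r * ℓ)) * (2 * ξ - (t - r * ℓ)) =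
      (2 * 2) * (ξ ^ 2 - (t : ℤ_[p]) * ξ + n) := by
    linear_combination hdecp
  have hnorm : ‖(2 * ξ - (t + r * ℓ)) - (2 * ξ - (t - r * ℓ))‖ = (p : ℝ) ^ (-m : ℤ) := by
    rw [show (2 * ξ - (t + r * ℓ)) - (2 * ξ - (t - r * ℓ)) = -(2 * (r * ℓ)) by ring, norm_neg,
      norm_mul, norm_mul, PadicInt.norm_two hp2, hr1,
      PadicInt.norm_natCast_eq_zpow_neg_padicValNat hℓ.ne', one_mul, one_mul]
  simp only [Set.mem_ofPred_eq, exists_or, ← sub_eq_iff_eq_add', ← dvd_def]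
  rw [← (h2.mul h2).dvd_mul_left, ← hfactor, PadicInt.pow_dvd_mul_iff_of_norm_sub_eq hnorm hm,
    h2.mul_left_dvd, h2.mul_left_dvd]

/-- Let `p` be an odd prime, `α ≥ 1`, `n ∈ {±1}`, `t ∈ ℤ` with
`t² - 4n = d·ℓ²` (`d` a fundamental discriminant, `ℓ > 0`, `t² - 4n` not a square).
If `ord_p(t² - 4n) < α` and `d` is a quadratic residue mod `p` (Legendre symbol `1`),
then the set of `ξ ∈ ℤ_p` satisfying `ξ² - tξ + n ≡ 0 mod p^α` equals
`{ t/2 ± √d·ℓ/2 + p^{α - ord_p ℓ}·u : u ∈ ℤ_p }`, where `√d = r` is a square root of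
`d` in `ℤ_p` (written via `2ξ = t ± rℓ + 2·p^{α - ord_p ℓ}·u`). -/
theorem padic_roots_low_valuation (p : ℕ) [hp : Fact p.Prime] (hp2 : p ≠ 2)
    (α : ℕ) (hα : 1 ≤ α) (n t : ℤ) (hn : n = 1 ∨ n = -1)
    (d : ℤ) (ℓ : ℕ) (hℓ : 0 < ℓ) (hd : IsFundamentalDiscriminant d)
    (hdec : t ^ 2 - 4 * n = d * (ℓ : ℤ) ^ 2)
    (hns : ¬IsSquare (t ^ 2 - 4 * n))
    (hval : padicValInt p (t ^ 2 - 4 * n) < α)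
    (hleg : legendreSym p d = 1)
    (r : ℤ_[p]) (hr : r ^ 2 = (d : ℤ_[p])) :
    {ξ : ℤ_[p] | (p : ℤ_[p]) ^ α ∣ (ξ ^ 2 - (t : ℤ_[p]) * ξ + (n : ℤ_[p]))} =
      {ξ : ℤ_[p] | ∃ u : ℤ_[p],
        2 * ξ = (t : ℤ_[p]) + r * (ℓ : ℤ_[p]) +
            2 * (p : ℤ_[p]) ^ (α - padicValNat p ℓ) * u ∨
        2 * ξ = (t : ℤ_[p]) - r * (ℓ : ℤ_[p]) +
            2 * (p : ℤ_[p]) ^ (α - padicValNat p ℓ) * u} :=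
  padic_roots_low_valuation_general p (hp := hp) hp2 α n t d ℓ hℓ hdec hval hleg r hr
end

section
/- Let D be a nonzero integer with D ≡ 0 or 1 mod 4, written uniquely as D = d·ℓ² with d a fundamental discriminant and ℓ > 0. Define ψ_D(n) = (d | n/gcd(n,ℓ)) using the Kronecker symbol. Then for Re(z) > 1, the Dirichlet series L(z, ψ_D) = Σ_{n≥1} ψ_D(n) n^{-z} satisfies L(z, ψ_D) = L(z, ψ_d) · ∏_{p | ℓ} [1 + (1 - ψ_d(p)) · Σ_{j=1}^{ord_p ℓ} p^{-jz}]. -/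
/-- The Kronecker symbol `(d | p)` at a prime `p`. -/
noncomputable def kroneckerAtPrime (d : ℤ) (p : ℕ) : ℤ :=
  if p = 2 then
    (if d % 8 = 1 ∨ d % 8 = 7 then 1 else if d % 8 = 3 ∨ d % 8 = 5 then -1 else 0)
  else if h : p.Prime then @legendreSym p ⟨h⟩ d else 0

/-- The Kronecker symbol `(d | n)` for `n ≥ 1`, extended completely multiplicatively
from its values at primes. -/
noncomputable def kronecker (d : ℤ) (n : ℕ) : ℤ :=
  n.factorization.prod fun p k => (kroneckerAtPrime d p) ^ k

/-!
Write `χ = ψ_d` and `e = ord_p ℓ`. The function `ψ_D(n) = χ(n / gcd(n, ℓ))` is multiplicative,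
with `ψ_D(p^k) = χ(p)^(k - min(k, e))`. Hence `ψ_D = χ * g` (Dirichlet convolution), where `g` is
the multiplicative function supported on the divisors of `ℓ` with `g(p^j) = 1 - χ(p)`
for `1 ≤ j ≤ e`: at `p^k` the convolution telescopes,
`χ(p)^k + ∑_{j=1}^{min(k,e)} (1 - χ(p)) χ(p)^(k-j) = χ(p)^(k - min(k,e))`.
As `g` is finitely supported, its L-series is a finite Euler product, namely the product over
`p ∣ ℓ` in the statement, and `L(ψ_D) = L(χ) L(g)` wherever `L(χ)` converges absolutely.
-/

open Finset ArithmeticFunction LSeries.notation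

theorem Nat.gcd_prime_pow_eq {p : ℕ} (hp : p.Prime) (k : ℕ) {ℓ : ℕ} (hℓ : ℓ ≠ 0) :
    (p ^ k).gcd ℓ = p ^ min k (ℓ.factorization p) := by
  apply Nat.dvd_antisymm
  · obtain ⟨i, hik, hi⟩ := (Nat.dvd_prime_pow hp).mp (Nat.gcd_dvd_left (p ^ k) ℓ)
    have hiℓ : i ≤ ℓ.factorization p :=
      (hp.pow_dvd_iff_le_factorization hℓ).mp (hi ▸ Nat.gcd_dvd_right _ _)
    rw [hi]
    exact Nat.pow_dvd_pow p (le_min hik hiℓ)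
  · exact Nat.dvd_gcd (Nat.pow_dvd_pow p (min_le_left _ _))
      ((hp.pow_dvd_iff_le_factorization hℓ).mpr (min_le_right _ _))

theorem sum_range_pow_sub_succ_mul_one_sub {R : Type*} [CommRing R] (c : R) {m k : ℕ}
    (hmk : m ≤ k) : ∑ j ∈ range m, c ^ (k - (j + 1)) * (1 - c) = c ^ (k - m) - c ^ k := by
  have htelescope := sum_range_sub (fun j => c ^ (k - j)) m
  rw [Nat.sub_zero] at htelescope
  rw [← htelescope]
  refine sum_congr rfl fun j hj => ?_
  have hj : k - j = k - (j + 1) + 1 := by have := mem_range.mp hj; omega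
  rw [hj, pow_succ]
  ring

namespace ArithmeticFunction

def ofMonoidWithZeroHom {R : Type*} [MonoidWithZero R] (χ : ℕ →*₀ R) : ArithmeticFunction R :=
  ⟨χ, χ.map_zero⟩

@[simp]
theorem ofMonoidWithZeroHom_apply {R : Type*} [MonoidWithZero R] (χ : ℕ →*₀ R) (n : ℕ) :
    ofMonoidWithZeroHom χ n = χ n := rfl

theorem isMultiplicative_ofMonoidWithZeroHom {R : Type*} [MonoidWithZero R] (χ : ℕ →*₀ R) :
    (ofMonoidWithZeroHom χ).IsMultiplicative :=
  ⟨map_one χ, fun _ => map_mul χ _ _⟩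

theorem IsMultiplicative.sum_divisors_eq_prod {R : Type*} [CommSemiring R]
    {f : ArithmeticFunction R} (hf : f.IsMultiplicative) {n : ℕ} (hn : n ≠ 0) :
    ∑ d ∈ n.divisors, f d =
      ∏ p ∈ n.primeFactors, ∑ j ∈ range (n.factorization p + 1), f (p ^ j) := by
  rw [← coe_zeta_mul_apply,
    (isMultiplicative_zeta.natCast.mul hf).multiplicative_factorization _ hn, Finsupp.prod,
    Nat.support_factorization]
  refine prod_congr rfl fun p hp => ?_
  rw [coe_zeta_mul_apply, Nat.sum_divisors_prime_pow (Nat.prime_of_mem_primeFactors hp)]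

theorem IsMultiplicative.LSeries_eq_prod_of_support_subset_divisors
    {f : ArithmeticFunction ℂ} (hf : f.IsMultiplicative) {ℓ : ℕ} (hℓ : ℓ ≠ 0)
    (hsupp : ∀ n ∉ ℓ.divisors, f n = 0) (z : ℂ) :
    LSeries ↗f z =
      ∏ p ∈ ℓ.primeFactors,
        ∑ j ∈ range (ℓ.factorization p + 1), f (p ^ j) / ((p : ℂ) ^ j) ^ z := by
  let summand : ArithmeticFunction ℂ := ⟨LSeries.term ↗f z, LSeries.term_zero _ _⟩
  have hsummand : summand.IsMultiplicative := by
    refine (IsMultiplicative.iff_ne_zero).mpr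
      ⟨by simp [summand, hf.map_one], fun hm hn hmn => ?_⟩
    simp only [summand, coe_mk, LSeries.term_of_ne_zero (mul_ne_zero hm hn),
      LSeries.term_of_ne_zero hm, LSeries.term_of_ne_zero hn, hf.map_mul_of_coprime hmn,
      Nat.cast_mul, Complex.natCast_mul_natCast_cpow, mul_div_mul_comm]
  have hsum : LSeries ↗f z = ∑ n ∈ ℓ.divisors, summand n :=
    tsum_eq_sum fun n hn => by simp [LSeries.term_def, hsupp n hn]
  rw [hsum, hsummand.sum_divisors_eq_prod hℓ]
  refine prod_congr rfl fun p hp => sum_congr rfl fun j _ => ?_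
  have hpj : p ^ j ≠ 0 := pow_ne_zero j (Nat.prime_of_mem_primeFactors hp).ne_zero
  simp [summand, LSeries.term_of_ne_zero hpj]

section CompDivGcd

variable {R : Type*} [CommRing R] (χ : ℕ →*₀ R) (ℓ : ℕ)

def compDivGcd : ArithmeticFunction R :=
  ⟨fun n => χ (n / n.gcd ℓ), by simp⟩

def gcdCorrection : ArithmeticFunction R :=
  ⟨fun n => if n ∈ ℓ.divisors then ∏ p ∈ n.primeFactors, (1 - χ p) else 0, by simp⟩

theorem compDivGcd_apply (n : ℕ) : compDivGcd χ ℓ n = χ (n / n.gcd ℓ) := rfl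

theorem isMultiplicative_compDivGcd : (compDivGcd χ ℓ).IsMultiplicative := by
  refine ⟨by simp [compDivGcd_apply], fun {m n} hmn => ?_⟩
  have hgcd : (m * n).gcd ℓ = m.gcd ℓ * n.gcd ℓ := by
    rw [Nat.gcd_comm, Nat.Coprime.gcd_mul ℓ hmn, Nat.gcd_comm ℓ, Nat.gcd_comm ℓ]
  rw [compDivGcd_apply, compDivGcd_apply, compDivGcd_apply, hgcd,
    ← Nat.div_mul_div_comm (Nat.gcd_dvd_left m ℓ) (Nat.gcd_dvd_left n ℓ), map_mul]

variable {ℓ}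

theorem compDivGcd_apply_prime_pow (hℓ : ℓ ≠ 0) {p : ℕ} (hp : p.Prime) (k : ℕ) :
    compDivGcd χ ℓ (p ^ k) = χ p ^ (k - min k (ℓ.factorization p)) := by
  rw [compDivGcd_apply, Nat.gcd_prime_pow_eq hp k hℓ, Nat.pow_div (min_le_left _ _) hp.pos,
    map_pow]

theorem gcdCorrection_apply_of_not_mem {n : ℕ} (hn : n ∉ ℓ.divisors) :
    gcdCorrection χ ℓ n = 0 :=
  if_neg hn

theorem isMultiplicative_gcdCorrection (hℓ : ℓ ≠ 0) :
    (gcdCorrection χ ℓ).IsMultiplicative := by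
  refine (IsMultiplicative.iff_ne_zero).mpr
    ⟨by simp [gcdCorrection, hℓ], fun {m n} hm hn hmn => ?_⟩
  have hdvd : m * n ∣ ℓ ↔ m ∣ ℓ ∧ n ∣ ℓ :=
    ⟨fun h => ⟨(dvd_mul_right m n).trans h, (dvd_mul_left n m).trans h⟩,
      fun h => hmn.mul_dvd_of_dvd_of_dvd h.1 h.2⟩
  simp only [gcdCorrection, coe_mk, Nat.mem_divisors, Nat.primeFactors_mul hm hn,
    prod_union hmn.disjoint_primeFactors, hdvd]
  split_ifs <;> simp_all

theorem gcdCorrection_apply_prime_pow (hℓ : ℓ ≠ 0) {p : ℕ} (hp : p.Prime) {j : ℕ}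
    (hj : j ≠ 0) :
    gcdCorrection χ ℓ (p ^ j) = if j ≤ ℓ.factorization p then 1 - χ p else 0 := by
  simp [gcdCorrection, Nat.primeFactors_pow p hj, hp.primeFactors,
    hp.pow_dvd_iff_le_factorization hℓ, hℓ]

theorem compDivGcd_eq_mul (hℓ : ℓ ≠ 0) :
    compDivGcd χ ℓ = ofMonoidWithZeroHom χ * gcdCorrection χ ℓ := by
  refine (IsMultiplicative.eq_iff_eq_on_prime_powers _ (isMultiplicative_compDivGcd χ ℓ) _
    ((isMultiplicative_ofMonoidWithZeroHom χ).mul (isMultiplicative_gcdCorrection χ hℓ))).mpr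
    fun p k hp => ?_
  set e := ℓ.factorization p
  have hsupp : (range k).filter (· + 1 ≤ e) = range (min k e) := by
    ext j; simp only [mem_filter, mem_range, lt_min_iff]; omega
  rw [compDivGcd_apply_prime_pow χ hℓ hp k, mul_apply, Nat.sum_divisorsAntidiagonal'
    (f := fun a b => ofMonoidWithZeroHom χ a * gcdCorrection χ ℓ b),
    Nat.sum_divisors_prime_pow hp, sum_range_succ']
  have hterm : ∀ j ∈ range k, χ (p ^ k / p ^ (j + 1)) * gcdCorrection χ ℓ (p ^ (j + 1)) =
      if j + 1 ≤ e then χ p ^ (k - (j + 1)) * (1 - χ p) else 0 := by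
    intro j hj
    rw [Nat.pow_div (mem_range.mp hj) hp.pos, map_pow,
      gcdCorrection_apply_prime_pow χ hℓ hp j.succ_ne_zero]
    split_ifs <;> simp
  simp only [ofMonoidWithZeroHom_apply]
  rw [sum_congr rfl hterm, ← sum_filter, hsupp, sum_range_pow_sub_succ_mul_one_sub _
    (min_le_left k e), pow_zero, Nat.div_one, map_pow,
    (isMultiplicative_gcdCorrection χ hℓ).map_one, mul_one, sub_add_cancel]

end CompDivGcd

theorem LSeries_gcdCorrection (χ : ℕ →*₀ ℂ) {ℓ : ℕ} (hℓ : ℓ ≠ 0) (z : ℂ) :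
    LSeries ↗(gcdCorrection χ ℓ) z = ∏ p ∈ ℓ.primeFactors,
      (1 + (1 - χ p) * ∑ j ∈ Icc 1 (ℓ.factorization p), (p : ℂ) ^ (-(j : ℂ) * z)) := by
  rw [(isMultiplicative_gcdCorrection χ hℓ).LSeries_eq_prod_of_support_subset_divisors hℓ
    fun n hn => gcdCorrection_apply_of_not_mem χ hn]
  refine prod_congr rfl fun p hp => ?_
  have hprime := Nat.prime_of_mem_primeFactors hp
  rw [Nat.range_succ_eq_Icc_zero, ← insert_Icc_add_one_left_eq_Icc (Nat.zero_le _),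
    sum_insert (by simp), mul_sum]
  congr 1
  · simp [(isMultiplicative_gcdCorrection χ hℓ).map_one]
  · refine sum_congr rfl fun j hj => ?_
    obtain ⟨hj1, hje⟩ := mem_Icc.mp hj
    rw [gcdCorrection_apply_prime_pow χ hℓ hprime (by omega), if_pos hje, neg_mul,
      Complex.cpow_neg, Complex.natCast_cpow_natCast_mul, div_eq_mul_inv]

theorem LSeries_compDivGcd (χ : ℕ →*₀ ℂ) {ℓ : ℕ} (hℓ : ℓ ≠ 0) {z : ℂ}
    (hχ : LSeriesSummable (fun n => χ n) z) :
    LSeries ↗(compDivGcd χ ℓ) z = LSeries (fun n => χ n) z * ∏ p ∈ ℓ.primeFactors,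
      (1 + (1 - χ p) * ∑ j ∈ Icc 1 (ℓ.factorization p), (p : ℂ) ^ (-(j : ℂ) * z)) := by
  have hsummable : LSeriesSummable ↗(gcdCorrection χ ℓ) z :=
    summable_of_ne_finset_zero (s := ℓ.divisors) fun n hn => by
      simp [LSeries.term_def, gcdCorrection_apply_of_not_mem χ hn]
  rw [compDivGcd_eq_mul χ hℓ, LSeries_mul' (f := ofMonoidWithZeroHom χ) hχ hsummable,
    LSeries_gcdCorrection χ hℓ]
  rfl

end ArithmeticFunction

section Kronecker

theorem kronecker_one (d : ℤ) : kronecker d 1 = 1 := by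
  simp [kronecker]

theorem kronecker_mul (d : ℤ) {m n : ℕ} (hm : m ≠ 0) (hn : n ≠ 0) :
    kronecker d (m * n) = kronecker d m * kronecker d n := by
  rw [kronecker, Nat.factorization_mul hm hn]
  exact Finsupp.prod_add_index' (fun _ => pow_zero _) (fun _ => pow_add _)

theorem abs_kroneckerAtPrime_le_one (d : ℤ) (p : ℕ) : |kroneckerAtPrime d p| ≤ 1 := by
  unfold kroneckerAtPrime
  split_ifs with _ _ _ hp
  · norm_num
  · norm_num
  · norm_num
  · have := Fact.mk hp
    rcases eq_or_ne (d : ZMod p) 0 with h0 | h0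
    · simp [(legendreSym.eq_zero_iff p d).mpr h0]
    · rcases legendreSym.eq_one_or_neg_one p h0 with h | h <;> simp [h]
  · norm_num

theorem abs_kronecker_le_one (d : ℤ) (n : ℕ) : |kronecker d n| ≤ 1 := by
  rw [kronecker, Finsupp.prod, abs_prod]
  exact prod_le_one (fun _ _ => abs_nonneg _) fun p _ => by
    rw [abs_pow]
    exact pow_le_one₀ (abs_nonneg _) (abs_kroneckerAtPrime_le_one d p)

variable (R : Type*) [Ring R] (d : ℤ)

/-- `kronecker d 0 = 1` (empty product); the homomorphism takes the value `0` at `0`. -/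
noncomputable def kroneckerHom : ℕ →*₀ R where
  toFun n := if n = 0 then 0 else kronecker d n
  map_zero' := if_pos rfl
  map_one' := by simp [kronecker_one]
  map_mul' m n := by
    rcases eq_or_ne m 0 with rfl | hm
    · simp
    rcases eq_or_ne n 0 with rfl | hn
    · simp
    simp [hm, hn, kronecker_mul d hm hn]

theorem kroneckerHom_apply {n : ℕ} (hn : n ≠ 0) : kroneckerHom R d n = kronecker d n :=
  if_neg hn

theorem LSeriesSummable_kroneckerHom {z : ℂ} (hz : 1 < z.re) :
    LSeriesSummable (fun n => kroneckerHom ℂ d n) z :=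
  LSeriesSummable_of_bounded_of_one_lt_re (m := 1) (fun n hn => by
    rw [kroneckerHom_apply ℂ d hn, Complex.norm_intCast]
    exact_mod_cast abs_kronecker_le_one d n) hz

end Kronecker

theorem LSeries_psiD_eq_general (d : ℤ) (ℓ : ℕ) (hℓ : 0 < ℓ)
    (z : ℂ) (hz : 1 < z.re) :
    LSeries (fun n => (kronecker d (n / n.gcd ℓ) : ℂ)) z =
      LSeries (fun n => (kronecker d n : ℂ)) z *
        ∏ p ∈ ℓ.primeFactors,
          (1 + (1 - (kronecker d p : ℂ)) *
            ∑ j ∈ Finset.Icc 1 (ℓ.factorization p), (p : ℂ) ^ (-(j : ℂ) * z)) := by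
  have hχ : ∀ {n : ℕ}, n ≠ 0 → kroneckerHom ℂ d n = kronecker d n := kroneckerHom_apply ℂ d
  have hdiv : ∀ {n : ℕ}, n ≠ 0 → n / n.gcd ℓ ≠ 0 := fun hn =>
    (Nat.div_pos (Nat.gcd_le_left ℓ (Nat.pos_of_ne_zero hn))
      (Nat.gcd_pos_of_pos_right _ hℓ)).ne'
  calc LSeries (fun n => (kronecker d (n / n.gcd ℓ) : ℂ)) z
      = LSeries ↗(compDivGcd (kroneckerHom ℂ d) ℓ) z :=
        LSeries_congr (fun hn => (hχ (hdiv hn)).symm) z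
    _ = _ := LSeries_compDivGcd _ hℓ.ne' (LSeriesSummable_kroneckerHom d hz)
    _ = _ := by
      rw [LSeries_congr (fun hn => hχ hn) z]
      congr 1
      exact prod_congr rfl fun p hp => by rw [hχ (Nat.prime_of_mem_primeFactors hp).ne_zero]

/-- Let `D ≠ 0` with `D ≡ 0` or `1 mod 4`, written as `D = d·ℓ²` with
`d` a fundamental discriminant and `ℓ > 0`. Define `ψ_D(n) = (d | n/gcd(n,ℓ))` via the
Kronecker symbol. Then for `Re z > 1`,
`L(z, ψ_D) = L(z, ψ_d) · ∏_{p ∣ ℓ} [1 + (1 - ψ_d(p)) Σ_{j=1}^{ord_p ℓ} p^{-jz}]`. -/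
theorem LSeries_psiD_eq (D d : ℤ) (ℓ : ℕ) (hD : D ≠ 0)
    (hD4 : D % 4 = 0 ∨ D % 4 = 1)
    (hd : IsFundamentalDiscriminant d) (hℓ : 0 < ℓ) (hdec : D = d * (ℓ : ℤ) ^ 2)
    (z : ℂ) (hz : 1 < z.re) :
    LSeries (fun n => (kronecker d (n / n.gcd ℓ) : ℂ)) z =
      LSeries (fun n => (kronecker d n : ℂ)) z *
        ∏ p ∈ ℓ.primeFactors,
          (1 + (1 - (kronecker d p : ℂ)) *
            ∑ j ∈ Finset.Icc 1 (ℓ.factorization p), (p : ℂ) ^ (-(j : ℂ) * z)) :=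
  LSeries_psiD_eq_general d ℓ hℓ z hz
end

section
/- Let p be an odd prime, e ≥ 2, and χ a Dirichlet character modulo p^e with conductor p^s where s ≤ e/2 and e > max{s,1}. Then there exists a Dirichlet character ψ modulo p^e such that χψ² is minimal and ord_p(cond(ψ)) + ord_p(cond(χψ)) ≤ e. -/
/-!
Write `χ` as the lift of a character `β` modulo `p^s`. The characters modulo `p^s` form a
cyclic group whose order `φ(p^s)` has the same `2`-adic valuation `v` as `p - 1`, so the
squares have index at most two and the other coset contains an element of order `2^v`. Hence
`β y²` is trivial or of order `2^v` for some `y` modulo `p^s`. Taking `ψ` the lift of `y`, both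
`ψ` and `χψ` are defined modulo `p^s`, so their conductor exponents add up to at most `2s ≤ e`.
-/

/-- A Dirichlet character `χ` modulo `p^e` (`p` an odd prime) of conductor `p^s` is
*minimal* if `s ∈ {0, e}` or `χ` has order `2^{ord₂(p-1)}`. -/
def IsMinimalOdd (p e : ℕ) (χ : DirichletCharacter ℂ (p ^ e)) : Prop :=
  padicValNat p χ.conductor = 0 ∨ padicValNat p χ.conductor = e ∨
    orderOf χ = 2 ^ (padicValNat 2 (p - 1))

/-- For a generator `g` and `q` the odd part of the order, `g ^ q` represents the coset of
non-squares (when there is one). -/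
theorem IsCyclic.exists_mul_sq_eq_one_or_orderOf_eq {G : Type*} [Group G] [IsCyclic G]
    [Finite G] (x : G) :
    ∃ y : G, x * y ^ 2 = 1 ∨ orderOf (x * y ^ 2) = 2 ^ padicValNat 2 (Nat.card G) := by
  obtain ⟨g, hg⟩ := IsCyclic.exists_generator (α := G)
  obtain ⟨k, rfl⟩ := Subgroup.mem_zpowers_iff.mp (hg x)
  have hord : orderOf g = Nat.card G := orderOf_eq_card_of_forall_mem_zpowers hg
  rw [← hord]
  have hq_odd : Odd (orderOf g / 2 ^ padicValNat 2 (orderOf g)) := by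
    rw [Nat.odd_iff, ← Nat.two_dvd_ne_zero, ← Nat.factorization_def _ Nat.prime_two]
    exact Nat.not_dvd_ordCompl Nat.prime_two (orderOf_pos g).ne'
  set q := orderOf g / 2 ^ padicValNat 2 (orderOf g) with hq
  rcases Int.even_or_odd k with ⟨j, hj⟩ | hk_odd
  · refine ⟨g ^ (-j), Or.inl ?_⟩
    rw [← zpow_natCast, ← zpow_mul, ← zpow_add, hj]
    ring_nf
    exact zpow_zero g
  · obtain ⟨j, hj⟩ : Even ((q : ℤ) - k) := (hq_odd.natCast (R := ℤ)).sub_odd hk_odd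
    refine ⟨g ^ j, Or.inr ?_⟩
    have hsq : g ^ k * (g ^ j) ^ 2 = g ^ q := by
      rw [← zpow_natCast, ← zpow_mul, ← zpow_add, ← zpow_natCast g q]
      congr 1
      push_cast
      linarith
    rw [hsq, hq, orderOf_pow_orderOf_div (orderOf_pos g).ne' pow_padicValNat_dvd]

theorem Nat.padicValNat_two_totient_prime_pow {p : ℕ} (hp : p.Prime) (hp2 : p ≠ 2) {s : ℕ}
    (hs : s ≠ 0) : padicValNat 2 (p ^ s).totient = padicValNat 2 (p - 1) := by
  have hp1 : p - 1 ≠ 0 := Nat.sub_ne_zero_of_lt hp.one_lt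
  rw [Nat.totient_prime_pow hp (Nat.pos_of_ne_zero hs),
    padicValNat.mul (pow_ne_zero _ hp.ne_zero) hp1, padicValNat.pow,
    padicValNat.eq_zero_of_not_dvd (hp.odd_of_ne_two hp2).not_two_dvd_nat, mul_zero, zero_add]

namespace DirichletCharacter

lemma padicValNat_conductor_le {R : Type*} [CommMonoidWithZero R] {p s : ℕ} (hp : p.Prime)
    (χ : DirichletCharacter R (p ^ s)) : padicValNat p χ.conductor ≤ s := by
  obtain ⟨j, hjs, hj⟩ := (Nat.dvd_prime_pow hp).mp χ.conductor_dvd_level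
  rw [hj, @padicValNat.prime_pow p ⟨hp⟩]
  exact hjs

lemma exists_mul_sq_eq_one_or_orderOf_eq {R : Type*} [CommRing R] [IsDomain R] {p s : ℕ}
    (hp : p.Prime) (hp2 : p ≠ 2) [HasEnoughRootsOfUnity R (Monoid.exponent (ZMod (p ^ s))ˣ)]
    (χ : DirichletCharacter R (p ^ s)) :
    ∃ ψ : DirichletCharacter R (p ^ s),
      χ * ψ ^ 2 = 1 ∨ orderOf (χ * ψ ^ 2) = 2 ^ padicValNat 2 (p - 1) := by
  rcases eq_or_ne s 0 with rfl | hs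
  · exact ⟨1, Or.inl (level_one' _ (pow_zero p))⟩
  have : NeZero (p ^ s) := ⟨pow_ne_zero s hp.ne_zero⟩
  obtain ⟨E⟩ := mulEquiv_units R (p ^ s)
  have := ZMod.isCyclic_units_of_prime_pow p hp hp2 s
  have : IsCyclic (DirichletCharacter R (p ^ s)) := isCyclic_of_surjective _ E.symm.surjective
  rw [← Nat.padicValNat_two_totient_prime_pow hp hp2 hs,
    ← card_eq_totient_of_hasEnoughRootsOfUnity R (p ^ s)]
  exact IsCyclic.exists_mul_sq_eq_one_or_orderOf_eq χ

end DirichletCharacter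

open DirichletCharacter

theorem exists_twist_to_minimal_odd_general (p : ℕ) (hp : p.Prime) (hp2 : p ≠ 2)
    (e s : ℕ) (χ : DirichletCharacter ℂ (p ^ e))
    (hcond : χ.conductor = p ^ s) (hs : 2 * s ≤ e) :
    ∃ ψ : DirichletCharacter ℂ (p ^ e),
      IsMinimalOdd p e (χ * ψ ^ 2) ∧
        padicValNat p ψ.conductor + padicValNat p (χ * ψ).conductor ≤ e := by
  have : NeZero (p ^ e) := ⟨pow_ne_zero e hp.ne_zero⟩
  obtain ⟨hdvd, β, rfl⟩ : χ.FactorsThrough (p ^ s) := hcond ▸ χ.factorsThrough_conductor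
  obtain ⟨y, hy⟩ := exists_mul_sq_eq_one_or_orderOf_eq hp hp2 β
  refine ⟨changeLevel hdvd y, ?_, ?_⟩
  · rw [← map_pow, ← map_mul]
    rcases hy with hy | hy
    · exact Or.inl (by rw [hy, map_one, conductor_one, padicValNat_one_right])
    · exact Or.inr (Or.inr (by rw [orderOf_injective _ (changeLevel_injective hdvd), hy]))
  · rw [← map_mul, conductor_changeLevel, conductor_changeLevel]
    have hψ := padicValNat_conductor_le hp y
    have hχψ := padicValNat_conductor_le hp (β * y)
    omega

/-- Let `p` be an odd prime, `e ≥ 2`, and `χ` a Dirichlet character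
modulo `p^e` with conductor `p^s` where `2s ≤ e` and `e > max{s, 1}`. Then there exists a
Dirichlet character `ψ` modulo `p^e` such that `χψ²` is minimal and
`ord_p(cond ψ) + ord_p(cond(χψ)) ≤ e`. -/
theorem exists_twist_to_minimal_odd (p : ℕ) (hp : p.Prime) (hp2 : p ≠ 2)
    (e s : ℕ) (he : 2 ≤ e) (χ : DirichletCharacter ℂ (p ^ e))
    (hcond : χ.conductor = p ^ s) (hs : 2 * s ≤ e) (he' : max s 1 < e) :
    ∃ ψ : DirichletCharacter ℂ (p ^ e),
      IsMinimalOdd p e (χ * ψ ^ 2) ∧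
        padicValNat p ψ.conductor + padicValNat p (χ * ψ).conductor ≤ e :=
  exists_twist_to_minimal_odd_general p hp hp2 e s χ hcond hs
end

section
/- Let e ≥ 4 be odd and χ a Dirichlet character modulo 2^e of conductor 2^s with 3 ≤ s ≤ (e-3)/2. Write χ(5) = e(a/2^{s-2}) for a unique odd a ∈ [1, 2^{s-2}), and define ψ mod 2^e by ψ(-1)=1 and ψ(5) = e(-a/2^{s-1}). Then χψ² has conductor at most 4, cond(ψ) = cond(χψ) = 2^{s+1}, and ord₂(cond(ψ)) + ord₂(cond(χψ)) = 2s + 2 < e. -/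
/-!
Put `ζ = e(a/2^{s-1})`, a primitive `2^{s-1}`-th root of unity since `a` is odd. Then
`χ(5) = ζ²` and `ψ(5) = ζ⁻¹`, so `(χψ)(5) = ζ` and `(χψ²)(5) = 1`.
For `2 ≤ t ≤ e` the kernel of `(ℤ/2^e)^× → (ℤ/2^t)^×` is generated by `5^{2^{t-2}}`:
it contains that element, whose order `2^{e-t}` is the order of the kernel. So a character
mod `2^e` factors through `2^t` iff its value at `5` has order dividing `2^{t-2}`, and all
the conductors are read off from the order of the value at `5`.
-/

namespace ZMod

def unitFive (e : ℕ) : (ZMod (2 ^ e))ˣ :=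
  unitOfCoprime 5 (Nat.Coprime.pow_right _ (by norm_num))

@[simp]
lemma coe_unitFive (e : ℕ) : (unitFive e : ZMod (2 ^ e)) = 5 := by
  simp [unitFive]

lemma orderOf_unitFive {e : ℕ} (he : 2 ≤ e) : orderOf (unitFive e) = 2 ^ (e - 2) := by
  obtain ⟨n, rfl⟩ := Nat.exists_eq_add_of_le' he
  rw [← orderOf_units, coe_unitFive, Nat.add_sub_cancel, orderOf_five]

lemma unitsMap_unitFive {t e : ℕ} (hte : t ≤ e) :
    unitsMap (pow_dvd_pow 2 hte) (unitFive e) = unitFive t := by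
  ext
  exact map_ofNat (castHom (pow_dvd_pow 2 hte) (ZMod (2 ^ t))) 5

lemma card_units_two_pow {k : ℕ} (hk : k ≠ 0) : Nat.card (ZMod (2 ^ k))ˣ = 2 ^ (k - 1) := by
  rw [Nat.card_eq_fintype_card, card_units_eq_totient, Nat.totient_prime_pow Nat.prime_two
    (Nat.pos_of_ne_zero hk)]
  simp

lemma card_ker_unitsMap_mul_card_units {m n : ℕ} [NeZero n] (hm : m ∣ n) :
    Nat.card (unitsMap hm).ker * Nat.card (ZMod m)ˣ = Nat.card (ZMod n)ˣ := by
  rw [← (unitsMap hm).ker.card_mul_index, Subgroup.index_ker, MonoidHom.range_eq_top.mpr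
    (unitsMap_surjective hm), Subgroup.card_top]

theorem ker_unitsMap_two_pow {t e : ℕ} (ht : 2 ≤ t) (hte : t ≤ e) :
    (unitsMap (pow_dvd_pow 2 hte)).ker = Subgroup.zpowers (unitFive e ^ 2 ^ (t - 2)) := by
  have hdvd : 2 ^ (t - 2) ∣ orderOf (unitFive e) :=
    orderOf_unitFive (ht.trans hte) ▸ pow_dvd_pow 2 (by omega)
  have hord : orderOf (unitFive e ^ 2 ^ (t - 2)) = 2 ^ (e - t) := by
    rw [orderOf_pow_of_dvd (by positivity) hdvd, orderOf_unitFive (ht.trans hte),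
      Nat.pow_div (by omega) two_pos]
    congr 1; omega
  have hmem : unitFive e ^ 2 ^ (t - 2) ∈ (unitsMap (pow_dvd_pow 2 hte)).ker := by
    rw [MonoidHom.mem_ker, map_pow, unitsMap_unitFive hte, ← orderOf_unitFive ht,
      pow_orderOf_eq_one]
  have hcard : Nat.card (unitsMap (pow_dvd_pow 2 hte)).ker = 2 ^ (e - t) := by
    have := card_ker_unitsMap_mul_card_units (pow_dvd_pow 2 hte)
    rw [card_units_two_pow (by omega), card_units_two_pow (by omega),
      show e - 1 = (e - t) + (t - 1) by omega, pow_add] at this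
    exact Nat.eq_of_mul_eq_mul_right (by positivity) this
  refine (Subgroup.eq_of_le_of_card_ge (Subgroup.zpowers_le.mpr hmem) ?_).symm
  rw [Nat.card_zpowers, hord, hcard]

end ZMod

namespace DirichletCharacter

variable {R : Type*} [CommMonoidWithZero R] {e : ℕ}

theorem factorsThrough_two_pow_iff (χ : DirichletCharacter R (2 ^ e)) {t : ℕ} (ht : 2 ≤ t)
    (hte : t ≤ e) : χ.FactorsThrough (2 ^ t) ↔ χ 5 ^ 2 ^ (t - 2) = 1 := by
  rw [factorsThrough_iff_ker_unitsMap (pow_dvd_pow 2 hte), ZMod.ker_unitsMap_two_pow ht hte,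
    Subgroup.zpowers_le, MonoidHom.mem_ker, Units.ext_iff, map_pow, Units.val_pow_eq_pow_val,
    MulChar.coe_toUnitHom, ZMod.coe_unitFive, Units.val_one]

theorem conductor_eq_two_pow (χ : DirichletCharacter R (2 ^ e)) {s : ℕ} (hs : 3 ≤ s)
    (hse : s ≤ e) (h : orderOf (χ 5) = 2 ^ (s - 2)) : χ.conductor = 2 ^ s := by
  have hdvd : ∀ t, 2 ≤ t → t ≤ s → (χ.conductor ∣ 2 ^ t ↔ s ≤ t) := by
    intro t ht hts
    rw [← mem_conductorSet_iff_conductor_dvd _ (pow_dvd_pow 2 (hts.trans hse)),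
      mem_conductorSet_iff, factorsThrough_two_pow_iff χ ht (hts.trans hse),
      ← orderOf_dvd_iff_pow_eq_one, h, Nat.pow_dvd_pow_iff_le_right (by norm_num)]
    omega
  obtain ⟨k, rfl⟩ : ∃ k, s = k + 1 := ⟨s - 1, by omega⟩
  exact Nat.eq_prime_pow_of_dvd_least_prime_pow Nat.prime_two
    (mt (hdvd k (by omega) (by omega)).mp (by omega)) ((hdvd (k + 1) (by omega) le_rfl).mpr le_rfl)

end DirichletCharacter

open Complex in
theorem twist_to_minimal_two_general (e s : ℕ)
    (χ : DirichletCharacter ℂ (2 ^ e))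
    (hs : 3 ≤ s) (hs' : s ≤ (e - 3) / 2)
    (a : ℕ) (ha : Odd a)
    (hχ5 : χ (5 : ZMod (2 ^ e)) =
      Complex.exp (2 * Real.pi * Complex.I * (a : ℂ) / (2 : ℂ) ^ (s - 2)))
    (ψ : DirichletCharacter ℂ (2 ^ e))
    (hψ5 : ψ (5 : ZMod (2 ^ e)) =
      Complex.exp (-(2 * Real.pi * Complex.I * (a : ℂ)) / (2 : ℂ) ^ (s - 1))) :
    (χ * ψ ^ 2).conductor ≤ 4 ∧
      ψ.conductor = 2 ^ (s + 1) ∧ (χ * ψ).conductor = 2 ^ (s + 1) ∧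
      padicValNat 2 ψ.conductor + padicValNat 2 (χ * ψ).conductor = 2 * s + 2 ∧
      2 * s + 2 < e := by
  set ζ := Complex.exp (2 * Real.pi * Complex.I * (a : ℂ) / (2 : ℂ) ^ (s - 1))
  have hζ : IsPrimitiveRoot ζ (2 ^ (s - 1)) := by
    convert Complex.isPrimitiveRoot_exp_of_coprime a (2 ^ (s - 1)) (by positivity)
      (Nat.Coprime.pow_right _ (Nat.coprime_two_right.mpr ha)) using 2
    push_cast; ring
  have hχ5' : χ 5 = ζ ^ 2 := by
    rw [hχ5, ← Complex.exp_nat_mul, show s - 1 = s - 2 + 1 by omega, pow_succ]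
    congr 1; push_cast; field_simp
  have hψ5' : ψ 5 = ζ⁻¹ := by rw [hψ5, ← Complex.exp_neg, neg_div]
  have hconductor : ∀ φ : DirichletCharacter ℂ (2 ^ e), orderOf (φ 5) = 2 ^ (s - 1) →
      φ.conductor = 2 ^ (s + 1) :=
    fun φ h ↦ φ.conductor_eq_two_pow (by omega) (by omega) h
  have hψ : ψ.conductor = 2 ^ (s + 1) :=
    hconductor ψ (by rw [hψ5', ← hζ.inv.eq_orderOf])
  have hχψ : (χ * ψ).conductor = 2 ^ (s + 1) := hconductor _ (by
    rw [MulChar.mul_apply, hχ5', hψ5', sq, mul_inv_cancel_right₀ (hζ.ne_zero (by positivity)),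
      ← hζ.eq_orderOf])
  have hχψ2 : (χ * ψ ^ 2).conductor ≤ 2 ^ 2 :=
    Nat.sInf_le (((χ * ψ ^ 2).factorsThrough_two_pow_iff le_rfl (by omega)).mpr (by
      rw [MulChar.mul_apply, MulChar.pow_apply' _ two_ne_zero, hχ5', hψ5', inv_pow,
        mul_inv_cancel₀ (pow_ne_zero _ (hζ.ne_zero (by positivity))), one_pow]))
  refine ⟨hχψ2, hψ, hχψ, ?_, by omega⟩
  rw [hψ, hχψ, padicValNat.prime_pow]
  ring

open Complex in
/-- Let `e ≥ 4` be odd and `χ` a Dirichlet character modulo `2^e` of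
conductor `2^s` with `3 ≤ s ≤ (e-3)/2`. Write `χ(5) = e(a/2^{s-2})` for the unique odd
`a ∈ [1, 2^{s-2})`, and define `ψ` mod `2^e` by `ψ(-1) = 1` and `ψ(5) = e(-a/2^{s-1})`.
Then `χψ²` has conductor at most `4`, `cond(ψ) = cond(χψ) = 2^{s+1}`, and
`ord₂(cond ψ) + ord₂(cond χψ) = 2s + 2 < e`. -/
theorem twist_to_minimal_two (e s : ℕ) (he : Odd e) (he4 : 4 ≤ e)
    (χ : DirichletCharacter ℂ (2 ^ e)) (hcond : χ.conductor = 2 ^ s)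
    (hs : 3 ≤ s) (hs' : s ≤ (e - 3) / 2)
    (a : ℕ) (ha : Odd a) (ha1 : 1 ≤ a) (ha2 : a < 2 ^ (s - 2))
    (hχ5 : χ (5 : ZMod (2 ^ e)) =
      Complex.exp (2 * Real.pi * Complex.I * (a : ℂ) / (2 : ℂ) ^ (s - 2)))
    (ψ : DirichletCharacter ℂ (2 ^ e))
    (hψneg : ψ (-1 : ZMod (2 ^ e)) = 1)
    (hψ5 : ψ (5 : ZMod (2 ^ e)) =
      Complex.exp (-(2 * Real.pi * Complex.I * (a : ℂ)) / (2 : ℂ) ^ (s - 1))) :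
    (χ * ψ ^ 2).conductor ≤ 4 ∧
      ψ.conductor = 2 ^ (s + 1) ∧ (χ * ψ).conductor = 2 ^ (s + 1) ∧
      padicValNat 2 ψ.conductor + padicValNat 2 (χ * ψ).conductor = 2 * s + 2 ∧
      2 * s + 2 < e :=
  twist_to_minimal_two_general e s χ hs hs' a ha hχ5 ψ hψ5
end

section
/- Let N ≥ 1, q | N with q the conductor of a character χ mod N, and write e_p = ord_p(N), s_p = ord_p(q). Then for any real x, Σ_{c | N, q | N/gcd(c, N/c)} φ(gcd(c, N/c)) · gcd(c, N/c)^x = ∏_{p | N} [ 2 + (p-1)·p^x · (p^{m_p(x+1)} + p^{m'_p(x+1)} - 2)/(p^{x+1} - 1) ], where m_p = min{⌊e_p/2⌋, e_p - s_p} and m'_p = min{⌊(e_p-1)/2⌋, e_p - s_p}. -/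
/-!
For coprime `a, b` the divisors of `ab` are the products `uv` with `u ∣ a`, `v ∣ b`, and then
`gcd(uv, ab/(uv)) = gcd(u, a/u) · gcd(v, b/v)`, so (with `q` replaced by `gcd(q, N)`) the sum is a
multiplicative function of `N`. At `N = pⁿ` the divisor `pⁱ` contributes through
`gcd = p^min(i, n-i)`, each exponent `m ≤ ⌊n/2⌋` occurring for `i = m` and, when
`m ≤ ⌊(n-1)/2⌋`, again for `i = n - m`; the conductor condition cuts `m` off at `n - s`, and the
two truncated sums `Σ φ(pᵐ) p^{mx}` are geometric in `p^{x+1}`.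
-/

open Finset ArithmeticFunction

theorem Nat.Coprime.sum_divisors_mul_eq_sum_sum {M : Type*} [AddCommMonoid M] {a b : ℕ}
    (hab : a.Coprime b) (f : ℕ → M) :
    ∑ c ∈ (a * b).divisors, f c = ∑ u ∈ a.divisors, ∑ v ∈ b.divisors, f (u * v) := by
  rw [Nat.divisors_mul, Finset.mul_def, sum_image hab.mul_injOn_divisors, sum_product]

theorem Nat.Coprime.gcd_mul_div_mul {a b u v : ℕ} (hab : a.Coprime b) (hu : u ∣ a) (hv : v ∣ b) :
    Nat.gcd (u * v) (a * b / (u * v)) = Nat.gcd u (a / u) * Nat.gcd v (b / v) := by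
  have hcop {m n : ℕ} (hm : m ∣ a) (hn : n ∣ b) : m.Coprime n :=
    (hab.coprime_dvd_left hm).coprime_dvd_right hn
  have hau := Nat.div_dvd_of_dvd hu
  have hbv := Nat.div_dvd_of_dvd hv
  rw [← Nat.div_mul_div_comm hu hv, Nat.Coprime.gcd_mul _ (hcop hau hbv),
    (hcop hau hv).symm.gcd_mul_right_cancel, (hcop hu hbv).gcd_mul_left_cancel]

theorem Nat.Coprime.mul_dvd_mul_iff_of_dvd {a b d e m n : ℕ} (hab : a.Coprime b) (hd : d ∣ a)
    (he : e ∣ b) (hm : m ∣ a) (hn : n ∣ b) : d * e ∣ m * n ↔ d ∣ m ∧ e ∣ n := by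
  have hcop {m n : ℕ} (hm : m ∣ a) (hn : n ∣ b) : m.Coprime n :=
    (hab.coprime_dvd_left hm).coprime_dvd_right hn
  refine ⟨fun h => ⟨?_, ?_⟩, fun h => mul_dvd_mul h.1 h.2⟩
  · exact (hcop hd hn).dvd_of_dvd_mul_right (dvd_of_mul_right_dvd h)
  · exact (hcop hm he).symm.dvd_of_dvd_mul_left (dvd_of_mul_left_dvd h)

/-- Replacing `q` by `gcd q N`, harmless when `q ∣ N`, makes the sum multiplicative in `N`. -/
noncomputable def gcdTotientSum (q : ℕ) (x : ℝ) : ArithmeticFunction ℝ where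
  toFun N := ∑ c ∈ N.divisors,
    if Nat.gcd q N ∣ N / Nat.gcd c (N / c) then
      ((Nat.gcd c (N / c)).totient : ℝ) * ((Nat.gcd c (N / c) : ℝ)) ^ x
    else 0
  map_zero' := by simp

theorem gcdTotientSum_apply (q : ℕ) (x : ℝ) (N : ℕ) :
    gcdTotientSum q x N = ∑ c ∈ N.divisors,
      if Nat.gcd q N ∣ N / Nat.gcd c (N / c) then
        ((Nat.gcd c (N / c)).totient : ℝ) * ((Nat.gcd c (N / c) : ℝ)) ^ x
      else 0 := rfl

theorem isMultiplicative_gcdTotientSum (q : ℕ) (x : ℝ) : (gcdTotientSum q x).IsMultiplicative := by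
  refine ⟨by simp [gcdTotientSum_apply], fun {a b} hab => ?_⟩
  simp only [gcdTotientSum_apply, hab.sum_divisors_mul_eq_sum_sum, sum_mul_sum]
  refine sum_congr rfl fun u hu => sum_congr rfl fun v hv => ?_
  have hu := Nat.dvd_of_mem_divisors hu
  have hv := Nat.dvd_of_mem_divisors hv
  have hgu : Nat.gcd u (a / u) ∣ a := (Nat.gcd_dvd_left _ _).trans hu
  have hgv : Nat.gcd v (b / v) ∣ b := (Nat.gcd_dvd_left _ _).trans hv
  rw [hab.gcd_mul_div_mul hu hv, ← Nat.div_mul_div_comm hgu hgv, Nat.Coprime.gcd_mul q hab,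
    Nat.totient_mul ((hab.coprime_dvd_left hgu).coprime_dvd_right hgv)]
  simp only [hab.mul_dvd_mul_iff_of_dvd (Nat.gcd_dvd_right _ _) (Nat.gcd_dvd_right _ _)
    (Nat.div_dvd_of_dvd hgu) (Nat.div_dvd_of_dvd hgv), ite_and]
  push_cast
  rw [Real.mul_rpow (Nat.cast_nonneg _) (Nat.cast_nonneg _)]
  split_ifs <;> ring

theorem sum_range_min_sub {M : Type*} [AddCommMonoid M] (g : ℕ → M) (n : ℕ) :
    ∑ i ∈ range (n + 1), g (min i (n - i)) =
      ∑ m ∈ range (n / 2 + 1), g m + ∑ m ∈ range ((n + 1) / 2), g m := by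
  rw [show range (n + 1) = range (n / 2 + 1 + (n + 1) / 2) by congr 1; omega, sum_range_add,
    ← sum_range_reflect (fun m => g m) ((n + 1) / 2)]
  congr 1 <;> refine sum_congr rfl fun i hi => congrArg g ?_ <;>
    simp only [mem_range] at hi <;> omega

theorem sum_range_ite_le {M : Type*} [AddCommMonoid M] (f : ℕ → M) (K T : ℕ) :
    ∑ m ∈ range (K + 1), (if m ≤ T then f m else 0) = ∑ m ∈ range (min K T + 1), f m := by
  rw [← sum_filter]
  congr 1
  ext m
  simp only [mem_filter, mem_range]
  omega

theorem sum_range_totient_prime_pow_mul_pow {p : ℕ} (hp : p.Prime) {t : ℝ} (ht : p * t ≠ 1)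
    (M : ℕ) : ∑ m ∈ range (M + 1), ((p ^ m).totient : ℝ) * t ^ m =
      1 + (p - 1) * t * ((p * t) ^ M - 1) / (p * t - 1) := by
  have hpt : (p : ℝ) * t - 1 ≠ 0 := sub_ne_zero.mpr ht
  induction M with
  | zero => simp
  | succ M ih =>
    rw [sum_range_succ, ih, Nat.totient_prime_pow_succ hp]
    push_cast [Nat.cast_sub hp.one_le]
    field_simp
    ring

theorem gcdTotientSum_apply_prime_pow {q p n s : ℕ} (hp : p.Prime) (hn : 0 < n)
    (hs : Nat.gcd q (p ^ n) = p ^ s) {x : ℝ} (hx : x ≠ -1) :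
    gcdTotientSum q x (p ^ n) =
      2 + ((p : ℝ) - 1) * (p : ℝ) ^ x *
        ((p : ℝ) ^ (((min (n / 2) (n - s) : ℕ) : ℝ) * (x + 1)) +
          (p : ℝ) ^ (((min ((n - 1) / 2) (n - s) : ℕ) : ℝ) * (x + 1)) - 2) /
        ((p : ℝ) ^ (x + 1) - 1) := by
  have hp0 : (0 : ℝ) < p := by exact_mod_cast hp.pos
  have hsn : s ≤ n := (Nat.pow_dvd_pow_iff_le_right hp.one_lt).mp (hs ▸ Nat.gcd_dvd_right _ _)
  set t : ℝ := (p : ℝ) ^ x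
  have hpt : (p : ℝ) ^ (x + 1) = p * t := by rw [Real.rpow_add_one hp0.ne', mul_comm]
  have hpt_ne_one : (p : ℝ) * t ≠ 1 := by
    have hp1 : (p : ℝ) ≠ 1 := by exact_mod_cast hp.ne_one
    rw [← hpt]
    exact fun h => hx <| eq_neg_of_add_eq_zero_left <|
      (Real.rpow_right_inj hp0 hp1).mp (h.trans (Real.rpow_zero _).symm)
  set G : ℕ → ℝ := fun m => if m ≤ n - s then ((p ^ m).totient : ℝ) * t ^ m else 0
  have hterm : ∀ i ∈ range (n + 1),
      (if p ^ s ∣ p ^ n / Nat.gcd (p ^ i) (p ^ n / p ^ i) then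
        ((Nat.gcd (p ^ i) (p ^ n / p ^ i)).totient : ℝ) *
          ((Nat.gcd (p ^ i) (p ^ n / p ^ i) : ℝ)) ^ x else 0) = G (min i (n - i)) := by
    intro i hi
    have hin : i ≤ n := Nat.lt_succ_iff.mp (mem_range.mp hi)
    have hgcd : Nat.gcd (p ^ i) (p ^ (n - i)) = p ^ min i (n - i) := by
      rcases le_total i (n - i) with h | h
      · rw [min_eq_left h, Nat.gcd_eq_left (pow_dvd_pow p h)]
      · rw [min_eq_right h, Nat.gcd_eq_right (pow_dvd_pow p h)]
    rw [Nat.pow_div hin hp.pos, hgcd, Nat.pow_div (by omega) hp.pos, Nat.cast_pow,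
      ← Real.rpow_pow_comm hp0.le]
    simp only [G, Nat.pow_dvd_pow_iff_le_right hp.one_lt]
    exact if_congr (by omega) rfl rfl
  have hrpow (M : ℕ) : (p : ℝ) ^ ((M : ℝ) * (x + 1)) = (p * t) ^ M := by
    rw [mul_comm, Real.rpow_mul_natCast hp0.le, hpt]
  rw [gcdTotientSum_apply, hs, Nat.sum_divisors_prime_pow hp, sum_congr rfl hterm,
    sum_range_min_sub, show (n + 1) / 2 = (n - 1) / 2 + 1 by omega, sum_range_ite_le,
    sum_range_ite_le, sum_range_totient_prime_pow_mul_pow hp hpt_ne_one,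
    sum_range_totient_prime_pow_mul_pow hp hpt_ne_one, hrpow, hrpow, hpt]
  field_simp
  ring

theorem Nat.gcd_pow_factorization_of_dvd {p q N : ℕ} (hp : p.Prime) (hN : N ≠ 0) (hqN : q ∣ N) :
    Nat.gcd q (p ^ N.factorization p) = p ^ q.factorization p := by
  have hq : q ≠ 0 := ne_zero_of_dvd_ne_zero hN hqN
  obtain ⟨k, -, hk⟩ := (Nat.dvd_prime_pow hp).mp (Nat.gcd_dvd_right q (p ^ N.factorization p))
  refine Nat.dvd_antisymm ?_ (Nat.dvd_gcd (Nat.ordProj_dvd q p) (pow_dvd_pow p ?_))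
  · rw [hk]
    exact pow_dvd_pow p ((hp.pow_dvd_iff_le_factorization hq).mp (hk ▸ Nat.gcd_dvd_left _ _))
  · exact (Nat.factorization_le_iff_dvd hq hN).mpr hqN p

theorem sum_totient_gcd_rpow_general (N q : ℕ) (hN : 1 ≤ N)
    (hqN : q ∣ N)
    (x : ℝ) (hx : x ≠ -1) :
    (∑ c ∈ N.divisors,
        if q ∣ N / Nat.gcd c (N / c) then
          ((Nat.gcd c (N / c)).totient : ℝ) * ((Nat.gcd c (N / c) : ℝ)) ^ x
        else 0) =
      ∏ p ∈ N.primeFactors,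
        (2 + ((p : ℝ) - 1) * (p : ℝ) ^ x *
          ((p : ℝ) ^ (((min (N.factorization p / 2)
                (N.factorization p - q.factorization p) : ℕ) : ℝ) * (x + 1)) +
           (p : ℝ) ^ (((min ((N.factorization p - 1) / 2)
                (N.factorization p - q.factorization p) : ℕ) : ℝ) * (x + 1)) - 2) /
          ((p : ℝ) ^ (x + 1) - 1)) := by
  have hN0 : N ≠ 0 := Nat.one_le_iff_ne_zero.mp hN
  calc _ = gcdTotientSum q x N := by rw [gcdTotientSum_apply, Nat.gcd_eq_left hqN]
    _ = ∏ p ∈ N.primeFactors, gcdTotientSum q x (p ^ N.factorization p) :=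
      (isMultiplicative_gcdTotientSum q x).multiplicative_factorization _ hN0
    _ = _ := prod_congr rfl fun p hp => by
      have hp' := Nat.prime_of_mem_primeFactors hp
      exact gcdTotientSum_apply_prime_pow hp' (hp'.factorization_pos_of_dvd hN0
        (Nat.dvd_of_mem_primeFactors hp)) (Nat.gcd_pow_factorization_of_dvd hp' hN0 hqN) hx

/-- Let `N ≥ 1` and let `q ∣ N` be the conductor of a Dirichlet
character `χ` mod `N`; write `e_p = ord_p N` and `s_p = ord_p q`. Then for any real
`x` (with `x ≠ -1`, where the closed form below is valid; at `x = -1` the right-hand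
side is interpreted by continuity),
`Σ_{c ∣ N, q ∣ N/gcd(c, N/c)} φ(gcd(c, N/c))·gcd(c, N/c)^x
  = ∏_{p ∣ N} [2 + (p-1)p^x (p^{m_p(x+1)} + p^{m'_p(x+1)} - 2)/(p^{x+1} - 1)]`,
where `m_p = min{⌊e_p/2⌋, e_p - s_p}` and `m'_p = min{⌊(e_p-1)/2⌋, e_p - s_p}`. -/
theorem sum_totient_gcd_rpow (N q : ℕ) (hN : 1 ≤ N)
    (χ : DirichletCharacter ℂ N) (hq : χ.conductor = q) (hqN : q ∣ N)
    (x : ℝ) (hx : x ≠ -1) :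
    (∑ c ∈ N.divisors,
        if q ∣ N / Nat.gcd c (N / c) then
          ((Nat.gcd c (N / c)).totient : ℝ) * ((Nat.gcd c (N / c) : ℝ)) ^ x
        else 0) =
      ∏ p ∈ N.primeFactors,
        (2 + ((p : ℝ) - 1) * (p : ℝ) ^ x *
          ((p : ℝ) ^ (((min (N.factorization p / 2)
                (N.factorization p - q.factorization p) : ℕ) : ℝ) * (x + 1)) +
           (p : ℝ) ^ (((min ((N.factorization p - 1) / 2)
                (N.factorization p - q.factorization p) : ℕ) : ℝ) * (x + 1)) - 2) /
          ((p : ℝ) ^ (x + 1) - 1)) :=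
  sum_totient_gcd_rpow_general N q hN hqN x hx
end

section
/- Let N ≥ 1 and χ a Dirichlet character mod N of conductor q. The number of cusps a/c of Γ₀(N) (with c | N, gcd(a,c)=1, a taken mod gcd(c, N/c)) that are open for χ, i.e., with q | N/gcd(c, N/c), equals Σ_{c | N, q | N/gcd(c, N/c)} φ(gcd(c, N/c)) = ∏_{p | N} [ p^{min{⌊e_p/2⌋, e_p - s_p}} + p^{min{⌊(e_p-1)/2⌋, e_p - s_p}} ], where e_p = ord_p(N) and s_p = ord_p(q). -/
open Finset


private lemma sum_pow_totient {p : ℕ} (hp : p.Prime) (r t : ℕ) :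
    (∑ k ∈ range (t + 1), if k ≤ r then (p ^ k).totient else 0) = p ^ (min t r) := by
  induction t with
  | zero => simp
  | succ t ih =>
    rw [sum_range_succ, ih]
    rcases le_or_gt (t + 1) r with h | h
    · rw [if_pos h, min_eq_left ((Nat.le_succ t).trans h), min_eq_left h,
        Nat.totient_prime_pow hp (Nat.succ_pos t), Nat.succ_sub_one]
      have h1 : 1 + (p - 1) = p := Nat.add_sub_cancel' hp.one_lt.le
      calc p ^ t + p ^ t * (p - 1) = p ^ t * (1 + (p - 1)) := by ring
        _ = p ^ (t + 1) := by rw [h1, pow_succ]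
    · rw [if_neg (not_le.mpr h), add_zero, min_eq_right (Nat.lt_succ_iff.mp h),
        min_eq_right h.le]

private lemma local_sum {p : ℕ} (hp : p.Prime) {e s : ℕ} (he : 1 ≤ e) (hs : s ≤ e) :
    (∑ k ∈ range (e + 1),
      if s ≤ e - min k (e - k) then (p ^ min k (e - k)).totient else 0)
    = p ^ min (e / 2) (e - s) + p ^ min ((e - 1) / 2) (e - s) := by
  have hab : e + 1 = (e / 2 + 1) + ((e - 1) / 2 + 1) := by omega
  rw [hab, Finset.sum_range_add]
  congr 1
  · rw [← sum_pow_totient hp (e - s) (e / 2)]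
    refine sum_congr rfl fun k hk => ?_
    rw [mem_range] at hk
    rw [min_eq_left (by omega : k ≤ e - k)]
    congr 1
    exact propext (by omega)
  · rw [← sum_pow_totient hp (e - s) ((e - 1) / 2)]
    conv_rhs => rw [← Finset.sum_range_reflect]
    refine sum_congr rfl fun i hi => ?_
    rw [mem_range] at hi
    rw [min_eq_right (by omega : e - (e / 2 + 1 + i) ≤ e / 2 + 1 + i)]
    have h2 : e - (e / 2 + 1 + i) = (e - 1) / 2 + 1 - 1 - i := by omega
    rw [h2]
    congr 1
    exact propext (by omega)

private lemma prod_factorization_eq {N c : ℕ} (hN : N ≠ 0) (hc : c ∣ N) :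
    ∏ p ∈ N.primeFactors, p ^ c.factorization p = c := by
  have hc0 : c ≠ 0 := ne_zero_of_dvd_ne_zero hN hc
  have h := Nat.factorization_prod_pow_eq_self hc0
  rw [Finsupp.prod, Nat.support_factorization] at h
  conv_rhs => rw [← h]
  symm
  apply Finset.prod_subset (Nat.primeFactors_mono hc hN)
  intro p _ hp
  rw [Finsupp.notMem_support_iff.mp (by rwa [Nat.support_factorization]), pow_zero]

private lemma totient_prod_prime_pow (a : ℕ → ℕ) :
    ∀ {s : Finset ℕ}, (∀ p ∈ s, p.Prime) →
    (∏ p ∈ s, p ^ a p).totient = ∏ p ∈ s, (p ^ a p).totient := by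
  intro s
  induction s using Finset.induction_on with
  | empty => simp
  | @insert p t hx ih =>
    intro hs
    have hp : p.Prime := hs p (mem_insert_self _ _)
    have hcop : (p ^ a p).Coprime (∏ q ∈ t, q ^ a q) := by
      apply Nat.Coprime.pow_left
      apply Nat.Coprime.prod_right
      intro q hq
      exact Nat.Coprime.pow_right _
        ((Nat.coprime_primes hp (hs q (mem_insert_of_mem hq))).mpr
          (by rintro rfl; exact hx hq))
    rw [prod_insert hx, prod_insert hx, Nat.totient_mul hcop,
      ih (fun q hq => hs q (mem_insert_of_mem hq))]

private lemma term_eq {N q c : ℕ} (hN0 : N ≠ 0) (hq0 : q ≠ 0) (hqN : q ∣ N) (hc : c ∣ N) :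
    (if q ∣ N / Nat.gcd c (N / c) then (Nat.gcd c (N / c)).totient else 0) =
    ∏ p ∈ N.primeFactors,
      (if q.factorization p ≤ N.factorization p -
          min (c.factorization p) (N.factorization p - c.factorization p)
       then (p ^ min (c.factorization p) (N.factorization p - c.factorization p)).totient
       else 0) := by
  have hc0 : c ≠ 0 := ne_zero_of_dvd_ne_zero hN0 hc
  set g := Nat.gcd c (N / c) with hgdef
  have hgc : g ∣ c := Nat.gcd_dvd_left _ _
  have hgN : g ∣ N := hgc.trans hc
  have hg0 : g ≠ 0 := ne_zero_of_dvd_ne_zero hN0 hgN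
  have hNc0 : N / c ≠ 0 :=
    (Nat.div_pos (Nat.le_of_dvd (Nat.pos_of_ne_zero hN0) hc) (Nat.pos_of_ne_zero hc0)).ne'
  have hNg0 : N / g ≠ 0 :=
    (Nat.div_pos (Nat.le_of_dvd (Nat.pos_of_ne_zero hN0) hgN) (Nat.pos_of_ne_zero hg0)).ne'
  have hgfac : ∀ p, g.factorization p =
      min (c.factorization p) (N.factorization p - c.factorization p) := by
    intro p
    rw [hgdef, Nat.factorization_gcd hc0 hNc0, Finsupp.inf_apply, Nat.factorization_div hc,
      Finsupp.tsub_apply]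
  have hqle : ∀ p, q.factorization p ≤ N.factorization p :=
    fun p => (Nat.factorization_le_iff_dvd hq0 hN0).mpr hqN p
  have hcond : (q ∣ N / g) ↔ ∀ p ∈ N.primeFactors,
      q.factorization p ≤ N.factorization p -
        min (c.factorization p) (N.factorization p - c.factorization p) := by
    rw [← Nat.factorization_le_iff_dvd hq0 hNg0, Nat.factorization_div hgN, Finsupp.le_def]
    constructor
    · intro h p _
      have := h p
      rwa [Finsupp.tsub_apply, hgfac] at this
    · intro h p
      rw [Finsupp.tsub_apply, hgfac]
      by_cases hp : p ∈ N.primeFactors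
      · exact h p hp
      · have he0 : N.factorization p = 0 :=
          Finsupp.notMem_support_iff.mp (by rwa [Nat.support_factorization])
        have := hqle p
        omega
  have hgtot : g.totient = ∏ p ∈ N.primeFactors,
      (p ^ min (c.factorization p) (N.factorization p - c.factorization p)).totient := by
    conv_lhs => rw [← prod_factorization_eq hN0 hgN]
    rw [totient_prod_prime_pow _ (fun p hp => Nat.prime_of_mem_primeFactors hp)]
    exact Finset.prod_congr rfl fun p _ => by rw [hgfac]
  rw [Finset.prod_ite_zero]
  by_cases h : q ∣ N / g
  · rw [if_pos h, if_pos (hcond.mp h), hgtot]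
  · rw [if_neg h, if_neg (fun hh => h (hcond.mpr hh))]

/-- Let `N ≥ 1` and `χ` a Dirichlet character mod `N` of conductor `q`.
The number of cusps `a/c` of `Γ₀(N)` (with `c ∣ N`, `gcd(a,c) = 1`, `a` taken modulo
`gcd(c, N/c)`) that are open for `χ`, i.e. with `q ∣ N/gcd(c, N/c)`, equals
`Σ_{c ∣ N, q ∣ N/gcd(c, N/c)} φ(gcd(c, N/c))
  = ∏_{p ∣ N} [p^{min{⌊e_p/2⌋, e_p - s_p}} + p^{min{⌊(e_p-1)/2⌋, e_p - s_p}}]`,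
where `e_p = ord_p N` and `s_p = ord_p q`.  The open cusps are counted by the pairs
`(c, a)` with `c ∣ N`, `q ∣ N/gcd(c, N/c)` and `a` a residue mod `gcd(c, N/c)` coprime
to `gcd(c, N/c)`. -/
theorem card_open_cusps (N : ℕ) (hN : 0 < N) (χ : DirichletCharacter ℂ N)
    (q : ℕ) (hq : χ.conductor = q) :
    (((N.divisors.filter fun c => q ∣ N / Nat.gcd c (N / c)).sigma
        fun c => (Finset.range (Nat.gcd c (N / c))).filter
          fun a => Nat.Coprime a (Nat.gcd c (N / c))).card : ℕ) =
      (∑ c ∈ N.divisors,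
        if q ∣ N / Nat.gcd c (N / c) then (Nat.gcd c (N / c)).totient else 0) ∧
    (∑ c ∈ N.divisors,
        if q ∣ N / Nat.gcd c (N / c) then (Nat.gcd c (N / c)).totient else 0) =
      ∏ p ∈ N.primeFactors,
        (p ^ (min (N.factorization p / 2) (N.factorization p - q.factorization p)) +
         p ^ (min ((N.factorization p - 1) / 2)
              (N.factorization p - q.factorization p))) := by
  have hN0 : N ≠ 0 := hN.ne'
  have hqN : q ∣ N := hq ▸ χ.conductor_dvd_level
  have hq0 : q ≠ 0 := fun h => hN0 (Nat.eq_zero_of_zero_dvd (h ▸ hqN))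
  have hqle : ∀ p, q.factorization p ≤ N.factorization p :=
    fun p => (Nat.factorization_le_iff_dvd hq0 hN0).mpr hqN p
  constructor
  · rw [Finset.card_sigma, Finset.sum_filter]
    refine Finset.sum_congr rfl fun c hc => ?_
    split
    · rw [Nat.totient_eq_card_coprime]
      congr 1
      apply Finset.filter_congr
      intro a _
      simp [Nat.coprime_comm]
    · rfl
  · -- the multiplicative formula
    symm
    set e := fun p => N.factorization p with he
    set T := fun (p k : ℕ) =>
      if q.factorization p ≤ e p - min k (e p - k) then (p ^ min k (e p - k)).totient else 0
      with hT
    have key : ∀ (fn : (p : ℕ) → p ∈ N.primeFactors → ℕ) (p : ℕ) (hp : p ∈ N.primeFactors),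
        (∏ x ∈ N.primeFactors.attach, x.1 ^ fn x.1 x.2).factorization p = fn p hp := by
      intro fn p hp
      rw [Nat.factorization_prod
        (fun x _ => pow_ne_zero _ (Nat.prime_of_mem_primeFactors x.2).pos.ne'),
        Finsupp.finset_sum_apply,
        Finset.sum_eq_single_of_mem ⟨p, hp⟩ (mem_attach _ _)]
      · show (p ^ fn p hp).factorization p = fn p hp
        rw [Nat.Prime.factorization_pow (Nat.prime_of_mem_primeFactors hp),
          Finsupp.single_apply, if_pos rfl]
      · intro x _ hx
        rw [Nat.Prime.factorization_pow (Nat.prime_of_mem_primeFactors x.2),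
          Finsupp.single_apply, if_neg (fun hh => hx (Subtype.ext hh))]
    have N_eq : ∏ p ∈ N.primeFactors, p ^ e p = N := prod_factorization_eq hN0 dvd_rfl
    have hi : ∀ fn ∈ N.primeFactors.pi (fun p => range (e p + 1)),
        (∏ x ∈ N.primeFactors.attach, x.1 ^ fn x.1 x.2) ∈ N.divisors := by
      intro fn hfn
      rw [Nat.mem_divisors]
      refine ⟨?_, hN0⟩
      calc (∏ x ∈ N.primeFactors.attach, x.1 ^ fn x.1 x.2)
          ∣ ∏ x ∈ N.primeFactors.attach, x.1 ^ e x.1 := by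
            apply Finset.prod_dvd_prod_of_dvd
            intro x _
            apply pow_dvd_pow
            have := Finset.mem_pi.mp hfn x.1 x.2
            rw [mem_range] at this
            omega
        _ = ∏ p ∈ N.primeFactors, p ^ e p := Finset.prod_attach _ (fun p => p ^ e p)
        _ = N := N_eq
    calc ∏ p ∈ N.primeFactors,
          (p ^ min (e p / 2) (e p - q.factorization p) +
           p ^ min ((e p - 1) / 2) (e p - q.factorization p))
        = ∏ p ∈ N.primeFactors, ∑ k ∈ range (e p + 1), T p k := by
          refine Finset.prod_congr rfl fun p hp => ?_
          have hpp := Nat.prime_of_mem_primeFactors hp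
          have he1 : 1 ≤ e p := (Nat.Prime.factorization_pos_of_dvd hpp hN0
            (Nat.dvd_of_mem_primeFactors hp))
          exact (local_sum hpp he1 (hqle p)).symm
      _ = ∑ fn ∈ N.primeFactors.pi (fun p => range (e p + 1)),
            ∏ x ∈ N.primeFactors.attach, T x.1 (fn x.1 x.2) :=
          Finset.prod_sum _ _ _
      _ = ∑ c ∈ N.divisors,
            if q ∣ N / Nat.gcd c (N / c) then (Nat.gcd c (N / c)).totient else 0 := by
          refine Finset.sum_nbij'
            (fun fn => ∏ x ∈ N.primeFactors.attach, x.1 ^ fn x.1 x.2)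
            (fun c p _ => c.factorization p) hi ?_ ?_ ?_ ?_
          · -- hj
            intro c hc
            rcases Nat.mem_divisors.mp hc with ⟨hcdvd, -⟩
            have hc0 : c ≠ 0 := ne_zero_of_dvd_ne_zero hN0 hcdvd
            refine Finset.mem_pi.mpr fun p hp => ?_
            rw [mem_range]
            exact Nat.lt_succ_of_le ((Nat.factorization_le_iff_dvd hc0 hN0).mpr hcdvd p)
          · -- left_inv
            intro fn hfn
            funext p hp
            exact key fn p hp
          · -- right_inv
            intro c hc
            show (∏ x ∈ N.primeFactors.attach, x.1 ^ c.factorization x.1) = c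
            rw [Finset.prod_attach _ (fun p => p ^ c.factorization p)]
            exact prod_factorization_eq hN0 (Nat.mem_divisors.mp hc).1
          · -- terms
            intro fn hfn
            have hcdvd : (∏ x ∈ N.primeFactors.attach, x.1 ^ fn x.1 x.2) ∣ N :=
              (Nat.mem_divisors.mp (hi fn hfn)).1
            rw [term_eq hN0 hq0 hqN hcdvd]
            rw [← Finset.prod_attach N.primeFactors]
            refine Finset.prod_congr rfl fun x _ => ?_
            rw [key fn x.1 x.2]
end

section
/- Let p be an odd prime and suppose (d/p) = 1 where t² - 4n = d·ℓ² with n ∈ {±1}, d a fundamental discriminant, ℓ > 0. Fix a square root √d of d modulo p^α. Then n·((t + √d·ℓ)/2)² ≡ 1 mod p^α if and only if ℓ ≡ 0 mod p^α. -/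
section NormOne

variable {R : Type*} [CommRing R] {n t d ℓ r x : R}

theorem four_mul_norm_sub_one_eq (hn : n ^ 2 = 1) (hr : r ^ 2 = d)
    (hdec : t ^ 2 - 4 * n = d * ℓ ^ 2) (hx : 2 * x = t + r * ℓ) :
    4 * (n * x ^ 2 - 1) = 2 * n * ℓ * (d * ℓ + t * r) := by
  linear_combination n * (2 * x + t + r * ℓ) * hx + n * ℓ ^ 2 * hr + n * hdec + 4 * hn

theorem isUnit_mul_add_mul_of_sq_sub_four_mul_eq (h2 : IsUnit (2 : R)) (hn : IsUnit n)
    (hd : IsUnit d) (hr : r ^ 2 = d) (hdec : t ^ 2 - 4 * n = d * ℓ ^ 2) :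
    IsUnit (d * ℓ + t * r) := by
  have hconj : (t + r * ℓ) * (t - r * ℓ) = 2 * 2 * n := by
    linear_combination hdec - ℓ ^ 2 * hr
  have hsum : IsUnit (t + r * ℓ) :=
    isUnit_of_mul_isUnit_left (hconj ▸ (h2.mul h2).mul hn)
  have hmul : r * (d * ℓ + t * r) = d * (t + r * ℓ) := by linear_combination t * hr
  exact isUnit_of_mul_isUnit_right (hmul ▸ hd.mul hsum)

theorem mul_sq_eq_one_iff_eq_zero (h2 : IsUnit (2 : R)) (hn : n ^ 2 = 1) (hd : IsUnit d)
    (hr : r ^ 2 = d) (hdec : t ^ 2 - 4 * n = d * ℓ ^ 2) (hx : 2 * x = t + r * ℓ) :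
    n * x ^ 2 = 1 ↔ ℓ = 0 := by
  have hnu : IsUnit n := IsUnit.of_mul_eq_one n (by rw [← sq, hn])
  have hkey := four_mul_norm_sub_one_eq hn hr hdec hx
  have hfactor : IsUnit (2 * n * (d * ℓ + t * r)) :=
    (h2.mul hnu).mul (isUnit_mul_add_mul_of_sq_sub_four_mul_eq h2 hnu hd hr hdec)
  constructor
  · intro h
    refine hfactor.mul_right_eq_zero.mp ?_
    linear_combination 4 * h - hkey
  · intro h
    refine sub_eq_zero.mp <| (h2.mul h2).mul_right_eq_zero.mp ?_
    linear_combination hkey + 2 * n * (d * ℓ + t * r) * h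

end NormOne

theorem ZMod.isUnit_intCast_prime_pow_of_not_dvd {p : ℕ} (hp : p.Prime) {a : ℤ}
    (ha : ¬ (p : ℤ) ∣ a) (α : ℕ) : IsUnit (a : ZMod (p ^ α)) := by
  rw [ZMod.coe_int_isUnit_iff_isCoprime, Nat.cast_pow]
  exact ((Nat.prime_iff_prime_int.mp hp).coprime_iff_not_dvd.mpr ha).pow_left

theorem norm_one_iff_padic_general (p : ℕ) [hp : Fact p.Prime] (hp2 : p ≠ 2)
    (α : ℕ) (n t : ℤ) (hn : n = 1 ∨ n = -1)
    (d : ℤ) (ℓ : ℕ)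
    (hdec : t ^ 2 - 4 * n = d * (ℓ : ℤ) ^ 2)
    (hleg : legendreSym p d = 1)
    (r : ZMod (p ^ α)) (hr : r ^ 2 = (d : ZMod (p ^ α)))
    (x : ZMod (p ^ α)) (hx : 2 * x = (t : ZMod (p ^ α)) + r * (ℓ : ZMod (p ^ α))) :
    (n : ZMod (p ^ α)) * x ^ 2 = 1 ↔ p ^ α ∣ ℓ := by
  have h2 : IsUnit (2 : ZMod (p ^ α)) := by
    have hp2' : ¬ (p : ℤ) ∣ 2 := by
      exact_mod_cast fun h ↦ hp2 ((Nat.prime_dvd_prime_iff_eq hp.out Nat.prime_two).mp h)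
    exact_mod_cast ZMod.isUnit_intCast_prime_pow_of_not_dvd hp.out hp2' α
  have hdu : IsUnit (d : ZMod (p ^ α)) := by
    refine ZMod.isUnit_intCast_prime_pow_of_not_dvd hp.out (fun h ↦ ?_) α
    rw [← ZMod.intCast_zmod_eq_zero_iff_dvd, ← legendreSym.eq_zero_iff, hleg] at h
    exact one_ne_zero h
  have hn2 : (n : ZMod (p ^ α)) ^ 2 = 1 := by rcases hn with rfl | rfl <;> simp
  have hdec' : (t : ZMod (p ^ α)) ^ 2 - 4 * n = d * (ℓ : ZMod (p ^ α)) ^ 2 := by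
    exact_mod_cast congrArg (Int.cast : ℤ → ZMod (p ^ α)) hdec
  rw [mul_sq_eq_one_iff_eq_zero h2 hn2 hdu hr hdec' hx, ZMod.natCast_eq_zero_iff]

/-- Let `p` be an odd prime and suppose `(d/p) = 1` where
`t² - 4n = d·ℓ²` with `n ∈ {±1}`, `d` a fundamental discriminant, `ℓ > 0`. Fix a square
root `r = √d` of `d` modulo `p^α`. Then `n·((t + √d·ℓ)/2)² ≡ 1 mod p^α` if and only if
`ℓ ≡ 0 mod p^α`. (Since `p` is odd, `2` is invertible mod `p^α`, and `(t + √d·ℓ)/2` is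
the element `x` with `2x = t + rℓ`.) -/
theorem norm_one_iff_padic (p : ℕ) [hp : Fact p.Prime] (hp2 : p ≠ 2)
    (α : ℕ) (hα : 1 ≤ α) (n t : ℤ) (hn : n = 1 ∨ n = -1)
    (d : ℤ) (ℓ : ℕ) (hℓ : 0 < ℓ) (hd : IsFundamentalDiscriminant d)
    (hdec : t ^ 2 - 4 * n = d * (ℓ : ℤ) ^ 2)
    (hleg : legendreSym p d = 1)
    (r : ZMod (p ^ α)) (hr : r ^ 2 = (d : ZMod (p ^ α)))
    (x : ZMod (p ^ α)) (hx : 2 * x = (t : ZMod (p ^ α)) + r * (ℓ : ZMod (p ^ α))) :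
    (n : ZMod (p ^ α)) * x ^ 2 = 1 ↔ p ^ α ∣ ℓ :=
  norm_one_iff_padic_general p (hp := hp) hp2 α n t hn d ℓ hdec hleg r hr x hx
end

section
/- Let χ be a Dirichlet character modulo 2^e of conductor 2^s with s ≥ 2, and let x be an odd integer. Then χ(x + 2^{s-1}) = -χ(x). -/
lemma aux_isUnit_intCast_odd {k : ℕ} (x : ℤ) (hx : Odd x) :
    IsUnit ((x : ZMod (2 ^ k))) := by
  have h2 : Nat.Coprime x.natAbs (2 ^ k) := by
    apply Nat.Coprime.pow_right
    rw [Nat.coprime_comm]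
    exact (Nat.Prime.coprime_iff_not_dvd Nat.prime_two).mpr
      (by
        intro h2
        have := Int.natAbs_odd.mpr hx
        rw [Nat.odd_iff] at this
        omega)
  have hu : IsUnit ((x.natAbs : ℕ) : ZMod (2 ^ k)) :=
    (ZMod.isUnit_iff_coprime _ _).mpr h2
  rcases Int.natAbs_eq x with h | h
  · rw [h, Int.cast_natCast]; exact hu
  · rw [h, Int.cast_neg, Int.cast_natCast]; exact hu.neg

lemma aux_odd_rep {k : ℕ} (hk : 1 ≤ k) (z : ZMod (2 ^ k)) (hz : IsUnit z) :
    ∃ j : ℤ, z = ((2 * j + 1 : ℤ) : ZMod (2 ^ k)) := by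
  haveI : NeZero ((2 : ℕ) ^ k) := ⟨pow_ne_zero k two_ne_zero⟩
  have hval : ((z.val : ℕ) : ZMod (2 ^ k)) = z := ZMod.natCast_rightInverse z
  have hcop : Nat.Coprime z.val (2 ^ k) := by
    rw [← ZMod.isUnit_iff_coprime]; rwa [hval]
  have hodd : Odd z.val := by
    rcases Nat.even_or_odd z.val with he | ho
    · exfalso
      have h2 : (2 : ℕ) ∣ z.val := he.two_dvd
      have h2' : (2 : ℕ) ∣ 2 ^ k := dvd_pow_self 2 (by omega)
      exact Nat.prime_two.one_lt.ne' (Nat.eq_one_of_dvd_coprimes hcop h2 h2' ▸ rfl) |>.elim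
    · exact ho
  obtain ⟨t, ht⟩ := hodd
  exact ⟨(t : ℤ), by rw [← hval, ht]; push_cast; ring⟩

lemma aux_key (s : ℕ) (hs : 2 ≤ s) (χ₀ : DirichletCharacter ℂ (2 ^ s))
    (hns : ¬ χ₀.FactorsThrough (2 ^ (s - 1))) (y : ZMod (2 ^ s)) (hy : IsUnit y) :
    χ₀ (y + 2 ^ (s - 1)) = -χ₀ y := by
  haveI : NeZero ((2 : ℕ) ^ s) := ⟨pow_ne_zero s two_ne_zero⟩
  set c : ZMod (2 ^ s) := 2 ^ (s - 1) with hc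
  have h0 : (2 : ZMod (2 ^ s)) ^ s = 0 := by
    have : ((2 ^ s : ℕ) : ZMod (2 ^ s)) = 0 := ZMod.natCast_self _
    push_cast at this
    exact this
  have hc2 : c * 2 = 0 := by
    rw [hc, ← pow_succ, Nat.sub_add_cancel (by omega)]
    exact h0
  have hcc : c * c = 0 := by
    rw [hc, ← pow_add]
    have h1 : s - 1 + (s - 1) = s + (s - 2) := by omega
    rw [h1, pow_add, h0, zero_mul]
  have even_kill : ∀ m : ℤ, Even m → c * (m : ZMod (2 ^ s)) = 0 := by
    rintro m ⟨t, rfl⟩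
    push_cast
    linear_combination (t : ZMod (2 ^ s)) * hc2
  obtain ⟨j, hj⟩ := aux_odd_rep (by omega) y hy
  set a : ℤ := 2 * j + 1 with ha
  have ha_odd : Odd a := ⟨j, by ring⟩
  have hyne : χ₀ y ≠ 0 := (hy.map χ₀).ne_zero
  have key2 : (y ^ 2 + c * y) ^ 2 = y ^ 4 := by
    linear_combination (y ^ 2) * hcc + (y ^ 3) * hc2
  have ht2 : (χ₀ (y + c)) ^ 2 * (χ₀ y) ^ 2 = (χ₀ y) ^ 4 := by
    calc (χ₀ (y + c)) ^ 2 * (χ₀ y) ^ 2 = (χ₀ ((y + c) * y)) ^ 2 := by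
          rw [map_mul]; ring
      _ = χ₀ (((y + c) * y) ^ 2) := (map_pow _ _ _).symm
      _ = χ₀ (y ^ 4) := by rw [show (y + c) * y = y ^ 2 + c * y by ring, key2]
      _ = (χ₀ y) ^ 4 := map_pow _ _ _
  have hsq : (χ₀ (y + c)) ^ 2 = (χ₀ y) ^ 2 := by
    have h4 : (χ₀ y) ^ 4 = (χ₀ y) ^ 2 * (χ₀ y) ^ 2 := by ring
    rw [h4] at ht2
    exact mul_right_cancel₀ (pow_ne_zero 2 hyne) ht2
  have hpm : χ₀ (y + c) = χ₀ y ∨ χ₀ (y + c) = -χ₀ y :=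
    mul_self_eq_mul_self_iff.mp (by rw [← pow_two, ← pow_two]; exact hsq)
  rcases hpm with H | H
  · exfalso
    apply hns
    rw [DirichletCharacter.factorsThrough_iff_ker_unitsMap (pow_dvd_pow 2 (by omega))]
    intro v hv
    rw [MonoidHom.mem_ker] at hv ⊢
    apply Units.ext
    rw [MulChar.coe_toUnitHom, Units.val_one]
    -- integer representation of v
    obtain ⟨i, hi⟩ := aux_odd_rep (by omega) (v : ZMod (2 ^ s)) v.isUnit
    set b : ℤ := 2 * i + 1 with hb
    have hv' : ((b : ℤ) : ZMod (2 ^ (s - 1))) = 1 := by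
      have := congrArg (Units.val) hv
      rw [ZMod.unitsMap_def] at this
      simpa [hi] using this
    have hdvd : ((2 : ℤ) ^ (s - 1)) ∣ b - 1 := by
      have : ((b - 1 : ℤ) : ZMod (2 ^ (s - 1))) = 0 := by push_cast [hv']; ring
      rw [ZMod.intCast_zmod_eq_zero_iff_dvd] at this
      exact_mod_cast this
    obtain ⟨m, hm⟩ := hdvd
    have hvrep : (v : ZMod (2 ^ s)) = 1 + c * (m : ZMod (2 ^ s)) := by
      rw [hi]
      have hb1 : b = 1 + 2 ^ (s - 1) * m := by linarith [hm]
      rw [hb1]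
      push_cast
      rw [hc]
    rcases Int.even_or_odd m with hme | hmo
    · rw [hvrep, even_kill m hme, add_zero, map_one]
    · -- (1 + c m)(a + c) = a
      have hma : Even (1 + m * a) := by
        have := (hmo.mul ha_odd)
        rcases this with ⟨q, hq⟩
        exact ⟨q + 1, by linarith⟩
      obtain ⟨q, hq⟩ := hma
      have h1ma : ((1 + m * a : ℤ) : ZMod (2 ^ s)) = 2 * (q : ZMod (2 ^ s)) := by
        rw [hq]; push_cast; ring
      have ident : (1 + c * (m : ZMod (2 ^ s))) * ((a : ZMod (2 ^ s)) + c)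
          = (a : ZMod (2 ^ s)) := by
        have expand : (1 + c * (m : ZMod (2 ^ s))) * ((a : ZMod (2 ^ s)) + c)
            = (a : ZMod (2 ^ s)) + c * ((1 + m * a : ℤ) : ZMod (2 ^ s))
              + (c * c) * (m : ZMod (2 ^ s)) := by push_cast; ring
        rw [expand, h1ma, hcc, zero_mul, add_zero,
          show c * (2 * (q : ZMod (2 ^ s))) = (c * 2) * q by ring, hc2, zero_mul, add_zero]
      have hane : χ₀ ((a : ZMod (2 ^ s)) + c) ≠ 0 := by
        have : ((a : ZMod (2 ^ s)) + c) = (((a + 2 ^ (s - 1) : ℤ)) : ZMod (2 ^ s)) := by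
          push_cast; rw [hc]
        rw [this]
        have hodd' : Odd (a + 2 ^ (s - 1) : ℤ) := by
          rcases ha_odd with ⟨t, ht⟩
          exact ⟨t + 2 ^ (s - 2), by rw [ht]; rw [show s - 1 = (s - 2) + 1 by omega]; ring⟩
        exact ((aux_isUnit_intCast_odd _ hodd').map χ₀).ne_zero
      have hmul : χ₀ (1 + c * (m : ZMod (2 ^ s))) * χ₀ ((a : ZMod (2 ^ s)) + c)
          = χ₀ ((a : ZMod (2 ^ s)) + c) := by
        rw [← map_mul, ident, ← hj]
        exact H.symm
      rw [hvrep]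
      exact mul_right_cancel₀ hane (by rw [hmul, one_mul])
  · exact H


/-- Let `χ` be a Dirichlet character modulo `2^e` of conductor `2^s`
with `s ≥ 2`, and let `x` be an odd integer. Then `χ(x + 2^{s-1}) = -χ(x)`. -/
theorem char_shift_half_conductor (e s : ℕ) (χ : DirichletCharacter ℂ (2 ^ e))
    (hcond : χ.conductor = 2 ^ s) (hs : 2 ≤ s) (x : ℤ) (hx : Odd x) :
    χ ((x : ZMod (2 ^ e)) + 2 ^ (s - 1)) = -χ ((x : ZMod (2 ^ e))) := by
  have hFT := χ.factorsThrough_conductor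
  rw [hcond] at hFT
  obtain ⟨hd, χ₀, hχ⟩ := hFT
  have hns : ¬ χ₀.FactorsThrough (2 ^ (s - 1)) := by
    rintro ⟨hd', ψ, hψ⟩
    have hft : χ.FactorsThrough (2 ^ (s - 1)) :=
      ⟨dvd_trans hd' hd, ψ, by
        rw [hχ, hψ, ← DirichletCharacter.changeLevel_trans]⟩
    have hle : χ.conductor ≤ 2 ^ (s - 1) := Nat.sInf_le hft
    rw [hcond] at hle
    exact absurd hle (not_le.mpr (Nat.pow_lt_pow_right one_lt_two (by omega)))
  have hodd' : Odd (x + 2 ^ (s - 1) : ℤ) := by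
    rcases hx with ⟨t, ht⟩
    exact ⟨t + 2 ^ (s - 2), by rw [ht, show s - 1 = (s - 2) + 1 by omega]; ring⟩
  have hx1 : IsUnit ((x : ZMod (2 ^ e)) + 2 ^ (s - 1)) := by
    have h : (x : ZMod (2 ^ e)) + 2 ^ (s - 1) = ((x + 2 ^ (s - 1) : ℤ) : ZMod (2 ^ e)) := by
      push_cast; ring
    rw [h]; exact aux_isUnit_intCast_odd _ hodd'
  have hx0 : IsUnit ((x : ZMod (2 ^ e))) := aux_isUnit_intCast_odd x hx
  have ev : ∀ z : ZMod (2 ^ e), IsUnit z → χ z = χ₀ (ZMod.castHom hd (ZMod (2 ^ s)) z) := by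
    intro z hz
    rw [hχ]
    have h := DirichletCharacter.changeLevel_eq_cast_of_dvd χ₀ hd hz.unit
    rw [hz.unit_spec] at h
    rw [h, ZMod.castHom_apply]
  rw [ev _ hx1, ev _ hx0]
  have hcast1 : (ZMod.castHom hd (ZMod (2 ^ s))) ((x : ZMod (2 ^ e)) + 2 ^ (s - 1))
      = (x : ZMod (2 ^ s)) + 2 ^ (s - 1) := by
    rw [map_add, map_intCast, map_pow, map_ofNat]
  have hcast0 : (ZMod.castHom hd (ZMod (2 ^ s))) ((x : ZMod (2 ^ e))) = (x : ZMod (2 ^ s)) :=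
    map_intCast _ _
  rw [hcast1, hcast0]
  exact aux_key s hs χ₀ hns _ (aux_isUnit_intCast_odd x hx)
end
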